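/- arXiv:2310.00963 — 3 statements merged into one kernel-verified Lean document; each statement's English description precedes it below -/
import Mathlib

section
/- Let ψ : [0,1] → ℂ be twice continuously differentiable and solve ε²ψ''(x) + a(x)ψ(x) = 0 on (0,1). Then the transformed vector function Z(x) := e^{−(i/ε)Φ^ε(x)} P U(x) is continuously differentiable and satisfies the first-order system Z'(x) = ε N^ε(x) Z(x) for all x ∈ (0,1), with initial value Z(0) = P U(0). -/
open Set Matrix

/-- `b(x) := -(1/(2 a(x)^{1/4})) * (a^{-1/4})''(x)`. -/
noncomputable def bfun (a : ℝ → ℝ) (x : ℝ) : ℝ :=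
  -(1 / (2 * a x ^ ((1 : ℝ) / 4))) * deriv (deriv (fun t => a t ^ (-(1 : ℝ) / 4))) x

/-- The phase `φ(x) := ∫_0^x (√(a(τ)) - ε² b(τ)) dτ`. -/
noncomputable def phase (a : ℝ → ℝ) (ε x : ℝ) : ℝ :=
  ∫ τ in (0 : ℝ)..x, (Real.sqrt (a τ) - ε ^ 2 * bfun a τ)

/-- The off-diagonal matrix `N^ε(x)`. -/
noncomputable def Nmat (a : ℝ → ℝ) (ε x : ℝ) : Matrix (Fin 2) (Fin 2) ℂ :=
  !![0, (bfun a x : ℂ) * Complex.exp (-(2 * Complex.I / (ε : ℂ)) * (phase a ε x : ℂ));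
     (bfun a x : ℂ) * Complex.exp ((2 * Complex.I / (ε : ℂ)) * (phase a ε x : ℂ)), 0]

/-- The matrix `P := (1/√2)[[i,1],[1,i]]`. -/
noncomputable def Pmat : Matrix (Fin 2) (Fin 2) ℂ :=
  (1 / (Real.sqrt 2 : ℂ)) • !![Complex.I, 1; 1, Complex.I]

/-- The diagonal matrix `diag(e^{it}, e^{-it})`. -/
noncomputable def Dmat (t : ℝ) : Matrix (Fin 2) (Fin 2) ℂ :=
  !![Complex.exp (Complex.I * t), 0; 0, Complex.exp (-(Complex.I * t))]

/-- `U(x) := (a^{1/4}ψ, ε (a^{1/4}ψ)'/√a)ᵀ`, with `(a^{1/4}ψ)' = (a^{1/4})'ψ + a^{1/4}ψ'`. -/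
noncomputable def Uex (a : ℝ → ℝ) (ε : ℝ) (ψ ψd : ℝ → ℂ) (x : ℝ) : Fin 2 → ℂ :=
  ![(a x ^ ((1 : ℝ) / 4) : ℝ) * ψ x,
    (ε : ℂ) * ((deriv (fun t => a t ^ ((1 : ℝ) / 4)) x : ℝ) * ψ x
        + (a x ^ ((1 : ℝ) / 4) : ℝ) * ψd x) / (Real.sqrt (a x) : ℝ)]

/-- `Z(x) := e^{-(i/ε)Φ^ε(x)} P U(x)`. -/
noncomputable def Zex (a : ℝ → ℝ) (ε : ℝ) (ψ ψd : ℝ → ℂ) (x : ℝ) : Fin 2 → ℂ :=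
  (Dmat (-(phase a ε x) / ε)) *ᵥ (Pmat *ᵥ Uex a ε ψ ψd x)

noncomputable def g4 (a : ℝ → ℝ) : ℝ → ℝ := fun t => a t ^ (-(1 : ℝ) / 4)
noncomputable def p4 (a : ℝ → ℝ) : ℝ → ℝ := fun t => a t ^ ((1 : ℝ) / 4)

section auxx
variable {a : ℝ → ℝ} {x ε : ℝ} {ψ ψd : ℝ → ℂ}

lemma hasDerivAt_p4 (ha : ContDiff ℝ (⊤ : ℕ∞) a) (hx : 0 < a x) :
    HasDerivAt (p4 a) (deriv a x * ((1 : ℝ) / 4) * a x ^ ((1 : ℝ) / 4 - 1)) x :=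
  ((ha.differentiable (by simp) x).hasDerivAt).rpow_const (Or.inl hx.ne')

lemma deriv_p4 (ha : ContDiff ℝ (⊤ : ℕ∞) a) (hx : 0 < a x) :
    deriv (p4 a) x = deriv a x * ((1 : ℝ) / 4) * a x ^ ((1 : ℝ) / 4 - 1) :=
  (hasDerivAt_p4 ha hx).deriv

lemma hasDerivAt_g4 (ha : ContDiff ℝ (⊤ : ℕ∞) a) (hx : 0 < a x) :
    HasDerivAt (g4 a) (deriv a x * (-(1 : ℝ) / 4) * a x ^ (-(1 : ℝ) / 4 - 1)) x :=
  ((ha.differentiable (by simp) x).hasDerivAt).rpow_const (Or.inl hx.ne')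

lemma deriv_g4 (ha : ContDiff ℝ (⊤ : ℕ∞) a) (hx : 0 < a x) :
    deriv (g4 a) x = deriv a x * (-(1 : ℝ) / 4) * a x ^ (-(1 : ℝ) / 4 - 1) :=
  (hasDerivAt_g4 ha hx).deriv

lemma hasDerivAt_g4' (ha : ContDiff ℝ (⊤ : ℕ∞) a) (hx : 0 < a x) :
    HasDerivAt (g4 a) (deriv (g4 a) x) x := by
  rw [deriv_g4 ha hx]; exact hasDerivAt_g4 ha hx

lemma hasDerivAt_p4' (ha : ContDiff ℝ (⊤ : ℕ∞) a) (hx : 0 < a x) :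
    HasDerivAt (p4 a) (deriv (p4 a) x) x := by
  rw [deriv_p4 ha hx]; exact hasDerivAt_p4 ha hx

lemma isOpen_pos_a (ha : ContDiff ℝ (⊤ : ℕ∞) a) : IsOpen {y | 0 < a y} :=
  isOpen_lt continuous_const ha.continuous

lemma contDiffOn_g4 (ha : ContDiff ℝ (⊤ : ℕ∞) a) : ContDiffOn ℝ (⊤ : ℕ∞) (g4 a) {y | 0 < a y} :=
  fun _ hy => ((ha.contDiffAt).rpow_const_of_ne (ne_of_gt hy)).contDiffWithinAt

lemma contDiffOn_dg4 (ha : ContDiff ℝ (⊤ : ℕ∞) a) : ContDiffOn ℝ (⊤ : ℕ∞) (deriv (g4 a)) {y | 0 < a y} :=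
  (contDiffOn_g4 ha).deriv_of_isOpen (isOpen_pos_a ha) (by simp)

lemma hasDerivAt_deriv_g4 (ha : ContDiff ℝ (⊤ : ℕ∞) a) (hx : 0 < a x) :
    HasDerivAt (deriv (g4 a)) (deriv (deriv (g4 a)) x) x :=
  ((((contDiffOn_dg4 ha).differentiableOn (by simp)) x hx).differentiableAt
    ((isOpen_pos_a ha).mem_nhds hx)).hasDerivAt

lemma continuousOn_d2g4 (ha : ContDiff ℝ (⊤ : ℕ∞) a) :
    ContinuousOn (deriv (deriv (g4 a))) {y | 0 < a y} :=
  ((contDiffOn_dg4 ha).deriv_of_isOpen (isOpen_pos_a ha)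
    (by simp : ((⊤ : ℕ∞) : WithTop ℕ∞) + 1 ≤ ((⊤ : ℕ∞) : WithTop ℕ∞))).continuousOn

lemma continuousOn_p4 (ha : ContDiff ℝ (⊤ : ℕ∞) a) : ContinuousOn (p4 a) {y | 0 < a y} :=
  fun y hy => ((hasDerivAt_p4' ha hy).continuousAt).continuousWithinAt

lemma continuousOn_bfun (ha : ContDiff ℝ (⊤ : ℕ∞) a) : ContinuousOn (bfun a) {y | 0 < a y} := by
  have h1 : ContinuousOn (fun y => -(1 / (2 * a y ^ ((1 : ℝ) / 4)))) {y | 0 < a y} := by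
    refine (continuousOn_const.div (continuousOn_const.mul (continuousOn_p4 ha)) ?_).neg
    intro y hy
    have : (0:ℝ) < a y ^ ((1:ℝ)/4) := Real.rpow_pos_of_pos hy _
    exact mul_ne_zero two_ne_zero this.ne'
  exact h1.mul (continuousOn_d2g4 ha)

lemma p4_eq (hx : 0 < a x) : p4 a x = Real.sqrt (a x) * g4 a x := by
  unfold p4 g4
  rw [Real.sqrt_eq_rpow, ← Real.rpow_add hx]
  norm_num

lemma deriv_p4_eq (ha : ContDiff ℝ (⊤ : ℕ∞) a) (hx : 0 < a x) :
    deriv (p4 a) x = -(Real.sqrt (a x) * deriv (g4 a) x) := by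
  rw [deriv_p4 ha hx, deriv_g4 ha hx, Real.sqrt_eq_rpow]
  have h : a x ^ ((1:ℝ)/4 - 1) = a x ^ (1 / (2:ℝ)) * a x ^ (-(1:ℝ)/4 - 1) := by
    rw [← Real.rpow_add hx]; norm_num
  rw [h]; ring

lemma deriv2_g4_eq (hx : 0 < a x) :
    deriv (deriv (g4 a)) x = -(2 * p4 a x * bfun a x) := by
  have hp : p4 a x ≠ 0 := (Real.rpow_pos_of_pos hx _).ne'
  unfold bfun
  show deriv (deriv (g4 a)) x = -(2 * p4 a x * (-(1 / (2 * p4 a x)) * deriv (deriv (g4 a)) x))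
  field_simp

lemma hasDerivAt_phase (ha : ContDiff ℝ (⊤ : ℕ∞) a) (hpos : ∀ y ∈ Icc (0:ℝ) 1, 0 < a y)
    (hx : x ∈ Icc (0:ℝ) 1) :
    HasDerivAt (phase a ε) (Real.sqrt (a x) - ε ^ 2 * bfun a x) x := by
  have hV : IsOpen {y | 0 < a y} := isOpen_pos_a ha
  have hIV : Icc (0:ℝ) 1 ⊆ {y | 0 < a y} := fun y hy => hpos y hy
  have hf : ContinuousOn (fun τ => Real.sqrt (a τ) - ε ^ 2 * bfun a τ) {y | 0 < a y} :=
    (Real.continuous_sqrt.comp_continuousOn ha.continuous.continuousOn).sub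
      (continuousOn_const.mul (continuousOn_bfun ha))
  have hsub : uIcc (0:ℝ) x ⊆ {y | 0 < a y} := by
    rw [uIcc_of_le hx.1]
    exact fun y hy => hIV ⟨hy.1, hy.2.trans hx.2⟩
  have hint : IntervalIntegrable (fun τ => Real.sqrt (a τ) - ε ^ 2 * bfun a τ)
      MeasureTheory.volume 0 x := (hf.mono hsub).intervalIntegrable
  have hmeas : StronglyMeasurableAtFilter (fun τ => Real.sqrt (a τ) - ε ^ 2 * bfun a τ)
      (nhds x) := ⟨{y | 0 < a y}, hV.mem_nhds (hIV hx),
        hf.aestronglyMeasurable hV.measurableSet⟩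
  have hcont : ContinuousAt (fun τ => Real.sqrt (a τ) - ε ^ 2 * bfun a τ) x :=
    hf.continuousAt (hV.mem_nhds (hIV hx))
  unfold phase
  exact intervalIntegral.integral_hasDerivAt_right hint hmeas hcont

lemma Uex_zero : Uex a ε ψ ψd x 0 = ((p4 a x : ℝ) : ℂ) * ψ x := by
  simp only [Uex, p4, Matrix.cons_val_zero]

lemma Uex_one : Uex a ε ψ ψd x 1 =
    (ε : ℂ) * (((deriv (p4 a) x : ℝ) : ℂ) * ψ x + ((p4 a x : ℝ) : ℂ) * ψd x)
      / ((Real.sqrt (a x) : ℝ) : ℂ) := by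
  simp only [Uex, p4, Matrix.cons_val_one, Matrix.head_cons]
  rfl

lemma Zex_apply : Zex a ε ψ ψd x =
    ![Complex.exp (Complex.I * ((-(phase a ε x) / ε : ℝ) : ℂ)) *
        ((Complex.I * Uex a ε ψ ψd x 0 + Uex a ε ψ ψd x 1) / (Real.sqrt 2 : ℂ)),
      Complex.exp (-(Complex.I * ((-(phase a ε x) / ε : ℝ) : ℂ))) *
        ((Uex a ε ψ ψd x 0 + Complex.I * Uex a ε ψ ψd x 1) / (Real.sqrt 2 : ℂ))] := by
  funext i
  fin_cases i <;>
    simp [Zex, Dmat, Pmat, Matrix.mulVec, dotProduct, Fin.sum_univ_two, Matrix.vecHead, Matrix.vecTail] <;> ring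

lemma NZ_apply : (ε : ℂ) • (Nmat a ε x *ᵥ Zex a ε ψ ψd x) =
    ![(ε : ℂ) * ((bfun a x : ℂ) *
        Complex.exp (-(2 * Complex.I / (ε : ℂ)) * (phase a ε x : ℂ)) * Zex a ε ψ ψd x 1),
      (ε : ℂ) * ((bfun a x : ℂ) *
        Complex.exp ((2 * Complex.I / (ε : ℂ)) * (phase a ε x : ℂ)) * Zex a ε ψ ψd x 0)] := by
  funext i
  fin_cases i <;>
    simp [Nmat, Matrix.mulVec, dotProduct, Fin.sum_univ_two, Matrix.vecHead, Matrix.vecTail] <;> ring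

lemma exp_comb1 (hε : (ε:ℝ) ≠ 0) (φ : ℝ) :
    Complex.exp (-(2 * Complex.I / (ε : ℂ)) * (φ : ℂ)) *
      Complex.exp (-(Complex.I * ((-φ / ε : ℝ) : ℂ))) =
    Complex.exp (Complex.I * ((-φ / ε : ℝ) : ℂ)) := by
  rw [← Complex.exp_add]
  congr 1
  have hεc : (ε : ℂ) ≠ 0 := Complex.ofReal_ne_zero.2 hε
  push_cast
  field_simp
  ring

lemma exp_comb2 (hε : (ε:ℝ) ≠ 0) (φ : ℝ) :
    Complex.exp ((2 * Complex.I / (ε : ℂ)) * (φ : ℂ)) *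
      Complex.exp (Complex.I * ((-φ / ε : ℝ) : ℂ)) =
    Complex.exp (-(Complex.I * ((-φ / ε : ℝ) : ℂ))) := by
  rw [← Complex.exp_add]
  congr 1
  have hεc : (ε : ℂ) ≠ 0 := Complex.ofReal_ne_zero.2 hε
  push_cast
  field_simp
  ring

end auxx

/-- if `ψ` is a C² solution of `ε²ψ'' + aψ = 0` on `(0,1)`, then
`Z := e^{-(i/ε)Φ^ε} P U` is C¹ on `[0,1]` and satisfies `Z' = ε N^ε Z` on `(0,1)`,
with `Z(0) = P U(0)`. -/
theorem stmt0 (a : ℝ → ℝ) (a₀ ε : ℝ) (ha : ContDiff ℝ (⊤ : ℕ∞) a) (ha₀ : 0 < a₀)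
    (haa : ∀ x ∈ Icc (0 : ℝ) 1, a₀ ≤ a x) (hε : 0 < ε) (hε1 : ε ≤ 1)
    (ψ ψd ψdd : ℝ → ℂ)
    (hψ : ∀ x ∈ Icc (0 : ℝ) 1, HasDerivWithinAt ψ (ψd x) (Icc 0 1) x)
    (hψd : ∀ x ∈ Icc (0 : ℝ) 1, HasDerivWithinAt ψd (ψdd x) (Icc 0 1) x)
    (hψdd : ContinuousOn ψdd (Icc 0 1))
    (hode : ∀ x ∈ Ioo (0 : ℝ) 1, (ε : ℂ) ^ 2 * ψdd x + (a x : ℂ) * ψ x = 0) :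
    ∃ Zd : ℝ → Fin 2 → ℂ,
      (∀ x ∈ Icc (0 : ℝ) 1, HasDerivWithinAt (Zex a ε ψ ψd) (Zd x) (Icc 0 1) x) ∧
      ContinuousOn Zd (Icc 0 1) ∧
      (∀ x ∈ Ioo (0 : ℝ) 1,
        HasDerivAt (Zex a ε ψ ψd) ((ε : ℂ) • (Nmat a ε x *ᵥ Zex a ε ψ ψd x)) x) ∧
      Zex a ε ψ ψd 0 = Pmat *ᵥ Uex a ε ψ ψd 0 := by
  have hεne : (ε:ℝ) ≠ 0 := hε.ne'
  have hεc : (ε:ℂ) ≠ 0 := Complex.ofReal_ne_zero.2 hεne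
  have hpos : ∀ y ∈ Icc (0:ℝ) 1, 0 < a y := fun y hy => lt_of_lt_of_le ha₀ (haa y hy)
  have hψc : ContinuousOn ψ (Icc 0 1) := fun y hy => (hψ y hy).continuousWithinAt
  -- extend the ODE to the closed interval by continuity
  have hode' : ∀ y ∈ Icc (0:ℝ) 1, ψdd y = -(((a y : ℝ):ℂ) * ψ y) / (ε:ℂ)^2 := by
    have hcont : ContinuousOn (fun y => (ε:ℂ)^2 * ψdd y + ((a y:ℝ):ℂ) * ψ y) (Icc 0 1) :=
      (continuousOn_const.mul hψdd).add
        ((Complex.continuous_ofReal.comp_continuousOn ha.continuous.continuousOn).mul hψc)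
    have hzero : ∀ y ∈ Icc (0:ℝ) 1, (ε:ℂ)^2 * ψdd y + ((a y:ℝ):ℂ) * ψ y = 0 := by
      intro y hy
      have hclos : y ∈ closure (Ioo (0:ℝ) 1) := by
        rw [closure_Ioo (by norm_num : (0:ℝ) ≠ 1)]; exact hy
      have hne : (nhdsWithin y (Ioo (0:ℝ) 1)).NeBot := mem_closure_iff_nhdsWithin_neBot.1 hclos
      have h1 : Filter.Tendsto (fun y => (ε:ℂ)^2 * ψdd y + ((a y:ℝ):ℂ) * ψ y)
          (nhdsWithin y (Ioo (0:ℝ) 1)) (nhds ((ε:ℂ)^2 * ψdd y + ((a y:ℝ):ℂ) * ψ y)) :=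
        ((hcont y hy).mono Ioo_subset_Icc_self).tendsto
      have h2 : Filter.Tendsto (fun y => (ε:ℂ)^2 * ψdd y + ((a y:ℝ):ℂ) * ψ y)
          (nhdsWithin y (Ioo (0:ℝ) 1)) (nhds 0) := by
        refine Filter.Tendsto.congr' ?_ tendsto_const_nhds
        filter_upwards [self_mem_nhdsWithin] with t ht
        exact (hode t ht).symm
      exact tendsto_nhds_unique h1 h2
    intro y hy
    have h := hzero y hy
    field_simp
    linear_combination h
  -- U₂ = v₁ on the interval
  have hu1v1 : ∀ t ∈ Icc (0:ℝ) 1, Uex a ε ψ ψd t 1 =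
      (ε : ℂ) * (-((deriv (g4 a) t : ℝ):ℂ) * ψ t + ((g4 a t : ℝ):ℂ) * ψd t) := by
    intro t ht
    have hat := hpos t ht
    have hs : Real.sqrt (a t) ≠ 0 := (Real.sqrt_pos.2 hat).ne'
    have hsc : ((Real.sqrt (a t) : ℝ):ℂ) ≠ 0 := Complex.ofReal_ne_zero.2 hs
    rw [Uex_one, deriv_p4_eq ha hat, p4_eq hat]
    push_cast
    field_simp
  -- the main derivative statement
  have hmain : ∀ x ∈ Icc (0:ℝ) 1, HasDerivWithinAt (Zex a ε ψ ψd)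
      ((ε : ℂ) • (Nmat a ε x *ᵥ Zex a ε ψ ψd x)) (Icc 0 1) x := by
    intro x hx
    have hat := hpos x hx
    have hs : Real.sqrt (a x) ≠ 0 := (Real.sqrt_pos.2 hat).ne'
    have hu0D : HasDerivWithinAt (fun t => ((p4 a t : ℝ):ℂ) * ψ t)
        (((deriv (p4 a) x : ℝ):ℂ) * ψ x + ((p4 a x : ℝ):ℂ) * ψd x) (Icc 0 1) x :=
      ((hasDerivAt_p4' ha hat).ofReal_comp.hasDerivWithinAt).mul (hψ x hx)
    have hv1D : HasDerivWithinAt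
        (fun t => (ε:ℂ) * (-((deriv (g4 a) t : ℝ):ℂ) * ψ t + ((g4 a t : ℝ):ℂ) * ψd t))
        ((ε:ℂ) * ((-((deriv (deriv (g4 a)) x : ℝ):ℂ) * ψ x + -((deriv (g4 a) x : ℝ):ℂ) * ψd x)
          + (((deriv (g4 a) x : ℝ):ℂ) * ψd x + ((g4 a x : ℝ):ℂ) * ψdd x))) (Icc 0 1) x :=
      ((((hasDerivAt_deriv_g4 ha hat).ofReal_comp.hasDerivWithinAt.neg.mul (hψ x hx)).add
        (((hasDerivAt_g4' ha hat).ofReal_comp.hasDerivWithinAt).mul (hψd x hx))).const_mul _)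
    have hφD := hasDerivAt_phase (ε := ε) ha hpos hx
    have herD : HasDerivAt (fun t => Complex.exp (Complex.I * ((-(phase a ε t) / ε : ℝ) : ℂ)))
        (Complex.exp (Complex.I * ((-(phase a ε x) / ε : ℝ) : ℂ)) *
          (Complex.I * ((-(Real.sqrt (a x) - ε^2 * bfun a x) / ε : ℝ) : ℂ))) x :=
      (((hφD.neg.div_const ε).ofReal_comp).const_mul Complex.I).cexp
    have hesD : HasDerivAt (fun t => Complex.exp (-(Complex.I * ((-(phase a ε t) / ε : ℝ) : ℂ))))
        (Complex.exp (-(Complex.I * ((-(phase a ε x) / ε : ℝ) : ℂ))) *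
          (-(Complex.I * ((-(Real.sqrt (a x) - ε^2 * bfun a x) / ε : ℝ) : ℂ)))) x :=
      ((((hφD.neg.div_const ε).ofReal_comp).const_mul Complex.I).neg).cexp
    rw [NZ_apply]
    refine hasDerivWithinAt_pi.2 fun i => ?_
    fin_cases i
    · -- component 0
      simp only [Fin.zero_eta, Fin.isValue, Matrix.cons_val_zero]
      have h0 : HasDerivWithinAt
          (fun t => Complex.exp (Complex.I * ((-(phase a ε t) / ε : ℝ) : ℂ)) *
            ((Complex.I * (((p4 a t : ℝ):ℂ) * ψ t) +
              (ε : ℂ) * (-((deriv (g4 a) t : ℝ):ℂ) * ψ t + ((g4 a t : ℝ):ℂ) * ψd t)) /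
              (Real.sqrt 2 : ℂ)))
          (Complex.exp (Complex.I * ((-(phase a ε x) / ε : ℝ) : ℂ)) *
            (Complex.I * ((-(Real.sqrt (a x) - ε^2 * bfun a x) / ε : ℝ) : ℂ)) *
            ((Complex.I * (((p4 a x : ℝ):ℂ) * ψ x) +
              (ε : ℂ) * (-((deriv (g4 a) x : ℝ):ℂ) * ψ x + ((g4 a x : ℝ):ℂ) * ψd x)) /
              (Real.sqrt 2 : ℂ)) +
           Complex.exp (Complex.I * ((-(phase a ε x) / ε : ℝ) : ℂ)) *
            ((Complex.I * (((deriv (p4 a) x : ℝ):ℂ) * ψ x + ((p4 a x : ℝ):ℂ) * ψd x) +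
              (ε:ℂ) * ((-((deriv (deriv (g4 a)) x : ℝ):ℂ) * ψ x + -((deriv (g4 a) x : ℝ):ℂ) * ψd x)
                + (((deriv (g4 a) x : ℝ):ℂ) * ψd x + ((g4 a x : ℝ):ℂ) * ψdd x))) /
              (Real.sqrt 2 : ℂ))) (Icc 0 1) x :=
        herD.hasDerivWithinAt.mul (((hu0D.const_mul Complex.I).add hv1D).div_const _)
      have hZeq : ∀ t ∈ Icc (0:ℝ) 1, Zex a ε ψ ψd t 0 =
          Complex.exp (Complex.I * ((-(phase a ε t) / ε : ℝ) : ℂ)) *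
            ((Complex.I * (((p4 a t : ℝ):ℂ) * ψ t) +
              (ε : ℂ) * (-((deriv (g4 a) t : ℝ):ℂ) * ψ t + ((g4 a t : ℝ):ℂ) * ψd t)) /
              (Real.sqrt 2 : ℂ)) := by
        intro t ht
        rw [Zex_apply]
        simp only [Matrix.cons_val_zero]
        rw [Uex_zero, hu1v1 t ht]
      refine (h0.congr hZeq (hZeq x hx)).congr_deriv ?_
      have hα := p4_eq hat
      have hα' := deriv_p4_eq ha hat
      have hg'' := deriv2_g4_eq hat
      have hodex := hode' x hx
      have hssc : ((a x : ℝ):ℂ) = ((Real.sqrt (a x) : ℝ):ℂ) * ((Real.sqrt (a x) : ℝ):ℂ) := by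
        exact_mod_cast (Real.mul_self_sqrt hat.le).symm
      have hE := exp_comb1 hεne (phase a ε x)
      rw [Zex_apply]
      simp only [Fin.isValue, Matrix.cons_val_zero, Matrix.cons_val_one, Matrix.head_cons]
      rw [Uex_zero, hu1v1 x hx, hg'', hα', hα, hodex, hssc]
      have hinv : ((ε:ℝ):ℂ) * ((ε:ℝ):ℂ)⁻¹ = 1 := mul_inv_cancel₀ hεc
      push_cast at hE ⊢
      linear_combination (-((Complex.I * ((ε:ℝ):ℂ)^2 * ((bfun a x:ℝ):ℂ) * (((g4 a x:ℝ):ℂ) * ψd x - ψ x * ((deriv (g4 a) x:ℝ):ℂ)) + ((Real.sqrt (a x):ℝ):ℂ) * ((ε:ℝ):ℂ) * ((bfun a x:ℝ):ℂ) * ((g4 a x:ℝ):ℂ) * ψ x) * ((Real.sqrt 2:ℝ):ℂ)⁻¹)) * hE + (Complex.exp (Complex.I * (-((phase a ε x:ℝ):ℂ) / ((ε:ℝ):ℂ))) * ((Real.sqrt 2:ℝ):ℂ)⁻¹ * (((ε:ℝ):ℂ) * ((bfun a x:ℝ):ℂ) * ((Real.sqrt (a x):ℝ):ℂ) * ((g4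 a x:ℝ):ℂ) * ψ x - ((Real.sqrt (a x):ℝ):ℂ)^2 * ((ε:ℝ):ℂ)⁻¹ * ((g4 a x:ℝ):ℂ) * ψ x)) * Complex.I_sq + (Complex.exp (Complex.I * (-((phase a ε x:ℝ):ℂ) / ((ε:ℝ):ℂ))) * ((Real.sqrt 2:ℝ):ℂ)⁻¹ * (-(Complex.I * ((Real.sqrt (a x):ℝ):ℂ) * ((g4 a x:ℝ):ℂ) * ψd x) + Complex.I * ((Real.sqrt (a x):ℝ):ℂ) * ((deriv (g4 a) x:ℝ):ℂ) * ψ x + Complex.I * ((ε:ℝ):ℂ)^2 * ((bfun a x:ℝ):ℂ) * ((g4 a x:ℝ):ℂ) * ψd x - Complex.I * ((ε:ℝ):ℂ)^2 * ((bfun a x:ℝ):ℂ) * ((deriv (g4 a) x:ℝ):ℂ) * ψ x + Complex.I^2 * ((Real.sqrt (a x):ℝ):ℂ) * ((ε:ℝ):ℂ) * ((bfun a x:ℝ):ℂ) * ((g4 a x:ℝ):ℂ) * ψ x - ((Real.sqrt (a x):ℝ):ℂ)^2 * ((ε:ℝ):ℂ)⁻¹ * ((g4 a x:ℝ):ℂ)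 * ψ x)) * hinv
    · -- component 1
      simp only [Fin.mk_one, Fin.isValue, Matrix.cons_val_one, Matrix.head_cons]
      have h1 : HasDerivWithinAt
          (fun t => Complex.exp (-(Complex.I * ((-(phase a ε t) / ε : ℝ) : ℂ))) *
            (((((p4 a t : ℝ):ℂ) * ψ t) +
              Complex.I * ((ε : ℂ) * (-((deriv (g4 a) t : ℝ):ℂ) * ψ t + ((g4 a t : ℝ):ℂ) * ψd t))) /
              (Real.sqrt 2 : ℂ)))
          (Complex.exp (-(Complex.I * ((-(phase a ε x) / ε : ℝ) : ℂ))) *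
            (-(Complex.I * ((-(Real.sqrt (a x) - ε^2 * bfun a x) / ε : ℝ) : ℂ))) *
            (((((p4 a x : ℝ):ℂ) * ψ x) +
              Complex.I * ((ε : ℂ) * (-((deriv (g4 a) x : ℝ):ℂ) * ψ x + ((g4 a x : ℝ):ℂ) * ψd x))) /
              (Real.sqrt 2 : ℂ)) +
           Complex.exp (-(Complex.I * ((-(phase a ε x) / ε : ℝ) : ℂ))) *
            (((((deriv (p4 a) x : ℝ):ℂ) * ψ x + ((p4 a x : ℝ):ℂ) * ψd x) +
              Complex.I * ((ε:ℂ) *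
                ((-((deriv (deriv (g4 a)) x : ℝ):ℂ) * ψ x + -((deriv (g4 a) x : ℝ):ℂ) * ψd x)
                + (((deriv (g4 a) x : ℝ):ℂ) * ψd x + ((g4 a x : ℝ):ℂ) * ψdd x)))) /
              (Real.sqrt 2 : ℂ))) (Icc 0 1) x :=
        hesD.hasDerivWithinAt.mul ((hu0D.add (hv1D.const_mul Complex.I)).div_const _)
      have hZeq : ∀ t ∈ Icc (0:ℝ) 1, Zex a ε ψ ψd t 1 =
          Complex.exp (-(Complex.I * ((-(phase a ε t) / ε : ℝ) : ℂ))) *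
            (((((p4 a t : ℝ):ℂ) * ψ t) +
              Complex.I * ((ε : ℂ) * (-((deriv (g4 a) t : ℝ):ℂ) * ψ t + ((g4 a t : ℝ):ℂ) * ψd t))) /
              (Real.sqrt 2 : ℂ)) := by
        intro t ht
        rw [Zex_apply]
        simp only [Matrix.cons_val_one, Matrix.head_cons, Matrix.cons_val_zero]
        rw [Uex_zero, hu1v1 t ht]
      refine (h1.congr hZeq (hZeq x hx)).congr_deriv ?_
      have hα := p4_eq hat
      have hα' := deriv_p4_eq ha hat
      have hg'' := deriv2_g4_eq hat
      have hodex := hode' x hx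
      have hssc : ((a x : ℝ):ℂ) = ((Real.sqrt (a x) : ℝ):ℂ) * ((Real.sqrt (a x) : ℝ):ℂ) := by
        exact_mod_cast (Real.mul_self_sqrt hat.le).symm
      have hE := exp_comb2 hεne (phase a ε x)
      rw [Zex_apply]
      simp only [Fin.isValue, Matrix.cons_val_zero, Matrix.cons_val_one, Matrix.head_cons]
      rw [Uex_zero, hu1v1 x hx, hg'', hα', hα, hodex, hssc]
      have hinv : ((ε:ℝ):ℂ) * ((ε:ℝ):ℂ)⁻¹ = 1 := mul_inv_cancel₀ hεc
      push_cast at hE ⊢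
      linear_combination (-((Complex.I * ((Real.sqrt (a x):ℝ):ℂ) * ((ε:ℝ):ℂ) * ((bfun a x:ℝ):ℂ) * ((g4 a x:ℝ):ℂ) * ψ x + ((ε:ℝ):ℂ)^2 * ((bfun a x:ℝ):ℂ) * ((g4 a x:ℝ):ℂ) * ψd x - ((ε:ℝ):ℂ)^2 * ((bfun a x:ℝ):ℂ) * ((deriv (g4 a) x:ℝ):ℂ) * ψ x) * ((Real.sqrt 2:ℝ):ℂ)⁻¹)) * hE + (Complex.exp (-(Complex.I * (-((phase a ε x:ℝ):ℂ) / ((ε:ℝ):ℂ)))) * ((Real.sqrt 2:ℝ):ℂ)⁻¹ * (((Real.sqrt (a x):ℝ):ℂ) * ((g4 a x:ℝ):ℂ) * ψd x - ((Real.sqrt (a x):ℝ):ℂ) * ((deriv (g4 a) x:ℝ):ℂ) * ψ x - ((ε:ℝ):ℂ)^2 * ((bfun a x:ℝ):ℂ) * ((g4 a x:ℝ):ℂ) * ψd x + ((ε:ℝ):ℂ)^2 * ((bfun a x:ℝ):ℂ) * ((deriv (g4 a) x:ℝ):ℂ) * ψ x)) * Complex.I_sq + (Complex.exp (-(Complex.I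 * (-((phase a ε x:ℝ):ℂ) / ((ε:ℝ):ℂ)))) * ((Real.sqrt 2:ℝ):ℂ)⁻¹ * (-(Complex.I * ((Real.sqrt (a x):ℝ):ℂ) * ((ε:ℝ):ℂ) * ((bfun a x:ℝ):ℂ) * ((g4 a x:ℝ):ℂ) * ψ x) - Complex.I * ((Real.sqrt (a x):ℝ):ℂ)^2 * ((ε:ℝ):ℂ)⁻¹ * ((g4 a x:ℝ):ℂ) * ψ x + Complex.I^2 * ((Real.sqrt (a x):ℝ):ℂ) * ((g4 a x:ℝ):ℂ) * ψd x - Complex.I^2 * ((Real.sqrt (a x):ℝ):ℂ) * ((deriv (g4 a) x:ℝ):ℂ) * ψ x - Complex.I^2 * ((ε:ℝ):ℂ)^2 * ((bfun a x:ℝ):ℂ) * ((g4 a x:ℝ):ℂ) * ψd x + Complex.I^2 * ((ε:ℝ):ℂ)^2 * ((bfun a x:ℝ):ℂ) * ((deriv (g4 a) x:ℝ):ℂ) * ψ x)) * hinv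
  -- assemble
  refine ⟨fun y => (ε : ℂ) • (Nmat a ε y *ᵥ Zex a ε ψ ψd y), hmain, ?_, ?_, ?_⟩
  · -- continuity of Zd
    have hZcont : ContinuousOn (Zex a ε ψ ψd) (Icc 0 1) :=
      fun y hy => (hmain y hy).continuousWithinAt
    have hZ0c : ContinuousOn (fun y => Zex a ε ψ ψd y 0) (Icc 0 1) :=
      (continuous_apply (0 : Fin 2)).comp_continuousOn hZcont
    have hZ1c : ContinuousOn (fun y => Zex a ε ψ ψd y 1) (Icc 0 1) :=
      (continuous_apply (1 : Fin 2)).comp_continuousOn hZcont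
    have hφcont : ContinuousOn (phase a ε) (Icc 0 1) :=
      fun y hy => ((hasDerivAt_phase (ε := ε) ha hpos hy).continuousAt).continuousWithinAt
    have hbc : ContinuousOn (bfun a) (Icc 0 1) :=
      (continuousOn_bfun ha).mono (fun y hy => hpos y hy)
    have hrw : (fun y => (ε : ℂ) • (Nmat a ε y *ᵥ Zex a ε ψ ψd y)) = fun y =>
        ![(ε : ℂ) * ((bfun a y : ℂ) *
            Complex.exp (-(2 * Complex.I / (ε : ℂ)) * (phase a ε y : ℂ)) * Zex a ε ψ ψd y 1),
          (ε : ℂ) * ((bfun a y : ℂ) *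
            Complex.exp ((2 * Complex.I / (ε : ℂ)) * (phase a ε y : ℂ)) * Zex a ε ψ ψd y 0)] :=
      funext fun y => NZ_apply
    rw [hrw]
    refine continuousOn_pi.2 fun i => ?_
    fin_cases i <;>
      simp only [Matrix.cons_val_zero, Matrix.cons_val_one, Matrix.head_cons]
    · exact continuousOn_const.mul
        (((Complex.continuous_ofReal.comp_continuousOn hbc).mul
          (Complex.continuous_exp.comp_continuousOn (continuousOn_const.mul
            (Complex.continuous_ofReal.comp_continuousOn hφcont)))).mul hZ1c)
    · exact continuousOn_const.mul
        (((Complex.continuous_ofReal.comp_continuousOn hbc).mul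
          (Complex.continuous_exp.comp_continuousOn (continuousOn_const.mul
            (Complex.continuous_ofReal.comp_continuousOn hφcont)))).mul hZ0c)
  · -- HasDerivAt on the open interval
    intro x hx
    exact (hmain x ⟨hx.1.le, hx.2.le⟩).hasDerivAt (Icc_mem_nhds hx.1 hx.2)
  · -- initial value
    have hφ0 : phase a ε 0 = 0 := intervalIntegral.integral_same
    unfold Zex
    rw [hφ0]
    funext i
    fin_cases i <;>
      simp [Dmat, Matrix.mulVec, dotProduct, Fin.sum_univ_two]
end

section
/- Let Z : [0,1] → ℂ² be continuously differentiable and solve Z'(x) = ε N^ε(x) Z(x) on (0,1). Define U(x) := P^{−1} e^{(i/ε)Φ^ε(x)} Z(x), where P^{−1} = (1/√2)[[−i, 1],[1, −i]], and set ψ(x) := a(x)^{−1/4} U_1(x) (U_1 denoting the first component of U). Then ψ is twice continuously differentiable, satisfies ε²ψ''(x) + a(x)ψ(x) = 0 on (0,1), and moreover U_2(x) = ε (a^{1/4}ψ)'(x)/√(a(x)). -/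
open Set Matrix

/-- The matrix `P⁻¹ := (1/√2)[[-i,1],[1,-i]]`. -/
noncomputable def Pinv : Matrix (Fin 2) (Fin 2) ℂ :=
  (1 / (Real.sqrt 2 : ℂ)) • !![-Complex.I, 1; 1, -Complex.I]

/-- `U(x) := P⁻¹ e^{(i/ε)Φ^ε(x)} Z(x)`. -/
noncomputable def Ufun (a : ℝ → ℝ) (ε : ℝ) (Z : ℝ → Fin 2 → ℂ) (x : ℝ) : Fin 2 → ℂ :=
  Pinv *ᵥ (Dmat (phase a ε x / ε) *ᵥ Z x)

/-- `ψ(x) := a(x)^{-1/4} U₁(x)`. -/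
noncomputable def psif (a : ℝ → ℝ) (ε : ℝ) (Z : ℝ → Fin 2 → ℂ) (x : ℝ) : ℂ :=
  ((a x ^ (-(1 : ℝ) / 4) : ℝ) : ℂ) * Ufun a ε Z x 0

/- ------------------ auxiliary definitions -------------------- -/

noncomputable def g1 (a : ℝ → ℝ) (x : ℝ) : ℝ :=
  (-(1:ℝ)/4) * a x ^ (-(1:ℝ)/4 - 1) * deriv a x

noncomputable def h1 (a : ℝ → ℝ) (x : ℝ) : ℝ :=
  ((1:ℝ)/4) * a x ^ ((1:ℝ)/4 - 1) * deriv a x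

noncomputable def g2 (a : ℝ → ℝ) (x : ℝ) : ℝ :=
  (-(1:ℝ)/4) * ((-(1:ℝ)/4 - 1) * a x ^ (-(1:ℝ)/4 - 1 - 1) * deriv a x) * deriv a x
    + (-(1:ℝ)/4) * a x ^ (-(1:ℝ)/4 - 1) * deriv (deriv a) x

noncomputable def Efun (a : ℝ → ℝ) (ε x : ℝ) : ℂ :=
  Complex.exp (Complex.I * ((phase a ε x : ℂ) / (ε : ℂ)))

noncomputable def Ffun (a : ℝ → ℝ) (ε x : ℝ) : ℂ :=
  Complex.exp (-(Complex.I * ((phase a ε x : ℂ) / (ε : ℂ))))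

lemma Efun_ne (a : ℝ → ℝ) (ε x : ℝ) : Efun a ε x ≠ 0 := Complex.exp_ne_zero _

lemma Ffun_eq (a : ℝ → ℝ) (ε x : ℝ) : Ffun a ε x = (Efun a ε x)⁻¹ := by
  rw [Ffun, Efun, Complex.exp_neg]

lemma hasDerivAt_rpow_comp {a : ℝ → ℝ} (ha : ContDiff ℝ (⊤ : ℕ∞) a) {x : ℝ} (hx : a x ≠ 0) (c : ℝ) :
    HasDerivAt (fun t => a t ^ c) (c * a x ^ (c - 1) * deriv a x) x := by
  have h := (Real.hasDerivAt_rpow_const (p := c) (Or.inl hx)).comp x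
      ((ha.differentiable (by simp)) x).hasDerivAt
  have h3 : HasDerivAt ((fun x => x ^ c) ∘ a) (c * a x ^ (c - 1) * deriv a x) x := by
    simpa [mul_comm, mul_assoc] using h
  exact h3

lemma hasDerivAt_g1 {a : ℝ → ℝ} (ha : ContDiff ℝ (⊤ : ℕ∞) a) {x : ℝ} (hx : a x ≠ 0) :
    HasDerivAt (g1 a) (g2 a x) x := by
  have hd : HasDerivAt (deriv a) (deriv (deriv a) x) x :=
    (((contDiff_infty_iff_deriv.mp (ha.of_le (by simp) : ContDiff ℝ (⊤:ℕ∞) a)).2.differentiable (by simp)) x).hasDerivAt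
  have hr := (hasDerivAt_rpow_comp ha hx (-(1:ℝ)/4 - 1)).const_mul (-(1:ℝ)/4)
  have := hr.mul hd
  unfold g1 g2
  exact this

lemma Efun_hasDerivAt {a : ℝ → ℝ} {ε x q : ℝ} (hq : HasDerivAt (phase a ε) q x) :
    HasDerivAt (Efun a ε) (Complex.I * ((q / ε : ℝ) : ℂ) * Efun a ε x) x := by
  have h1 := ((hq.div_const ε).ofReal_comp).const_mul Complex.I
  have h2 := h1.cexp
  have h3 : HasDerivAt (fun y => Complex.exp (Complex.I * ((phase a ε y : ℂ) / (ε : ℂ))))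
      (Complex.I * ((q / ε : ℝ) : ℂ) * Efun a ε x) x := by
    simpa [Efun, mul_comm] using h2
  exact h3

lemma Ffun_hasDerivAt {a : ℝ → ℝ} {ε x q : ℝ} (hq : HasDerivAt (phase a ε) q x) :
    HasDerivAt (Ffun a ε) (-(Complex.I * ((q / ε : ℝ) : ℂ)) * Ffun a ε x) x := by
  have h1 := (((hq.div_const ε).ofReal_comp).const_mul Complex.I).neg
  have h2 := h1.cexp
  have h3 : HasDerivAt (fun y => Complex.exp (-(Complex.I * ((phase a ε y : ℂ) / (ε : ℂ)))))
      (-(Complex.I * ((q / ε : ℝ) : ℂ)) * Ffun a ε x) x := by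
    simpa [Ffun, mul_comm] using h2
  exact h3

lemma Nexp_neg {a : ℝ → ℝ} {ε : ℝ} (hε : ε ≠ 0) (x : ℝ) :
    Complex.exp (-(2 * Complex.I / (ε : ℂ)) * (phase a ε x : ℂ)) = Ffun a ε x * Ffun a ε x := by
  rw [Ffun, ← Complex.exp_add]
  congr 1
  have : (ε : ℂ) ≠ 0 := Complex.ofReal_ne_zero.mpr hε
  push_cast
  field_simp
  ring

lemma Nexp_pos {a : ℝ → ℝ} {ε : ℝ} (hε : ε ≠ 0) (x : ℝ) :
    Complex.exp ((2 * Complex.I / (ε : ℂ)) * (phase a ε x : ℂ)) = Efun a ε x * Efun a ε x := by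
  rw [Efun, ← Complex.exp_add]
  congr 1
  have : (ε : ℂ) ≠ 0 := Complex.ofReal_ne_zero.mpr hε
  push_cast
  field_simp
  ring

lemma Ufun_zero (a : ℝ → ℝ) (ε : ℝ) (Z : ℝ → Fin 2 → ℂ) (x : ℝ) :
    Ufun a ε Z x 0 = (1 / (Real.sqrt 2 : ℂ)) *
      (-Complex.I * (Efun a ε x * Z x 0) + Ffun a ε x * Z x 1) := by
  simp [Ufun, Pinv, Dmat, Efun, Ffun, mulVec, dotProduct, Fin.sum_univ_two]
  ring

lemma Ufun_one (a : ℝ → ℝ) (ε : ℝ) (Z : ℝ → Fin 2 → ℂ) (x : ℝ) :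
    Ufun a ε Z x 1 = (1 / (Real.sqrt 2 : ℂ)) *
      (Efun a ε x * Z x 0 - Complex.I * (Ffun a ε x * Z x 1)) := by
  simp [Ufun, Pinv, Dmat, Efun, Ffun, mulVec, dotProduct, Fin.sum_univ_two]
  ring

/-- if `Z` is a C¹ solution of `Z' = ε N^ε Z` on `(0,1)`, then
`ψ := a^{-1/4} (P⁻¹ e^{(i/ε)Φ^ε} Z)₁` is C², solves `ε²ψ'' + aψ = 0` on `(0,1)`,
and `U₂ = ε (a^{1/4}ψ)'/√a`. -/
theorem stmt1 (a : ℝ → ℝ) (a₀ ε : ℝ) (ha : ContDiff ℝ (⊤ : ℕ∞) a) (ha₀ : 0 < a₀)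
    (haa : ∀ x ∈ Icc (0 : ℝ) 1, a₀ ≤ a x) (hε : 0 < ε) (hε1 : ε ≤ 1)
    (Z : ℝ → Fin 2 → ℂ) (Zd : ℝ → Fin 2 → ℂ)
    (hZ : ∀ x ∈ Icc (0 : ℝ) 1, HasDerivWithinAt Z (Zd x) (Icc 0 1) x)
    (hZd : ContinuousOn Zd (Icc 0 1))
    (hode : ∀ x ∈ Ioo (0 : ℝ) 1, Zd x = (ε : ℂ) • (Nmat a ε x *ᵥ Z x)) :
    ∃ ψd ψdd : ℝ → ℂ,
      (∀ x ∈ Icc (0 : ℝ) 1, HasDerivWithinAt (psif a ε Z) (ψd x) (Icc 0 1) x) ∧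
      (∀ x ∈ Icc (0 : ℝ) 1, HasDerivWithinAt ψd (ψdd x) (Icc 0 1) x) ∧
      ContinuousOn ψdd (Icc 0 1) ∧
      (∀ x ∈ Ioo (0 : ℝ) 1,
        (ε : ℂ) ^ 2 * ψdd x + (a x : ℂ) * psif a ε Z x = 0) ∧
      (∀ x ∈ Icc (0 : ℝ) 1,
        Ufun a ε Z x 1 = (ε : ℂ) * ((deriv (fun t => a t ^ ((1 : ℝ) / 4)) x : ℝ) * psif a ε Z x
            + (a x ^ ((1 : ℝ) / 4) : ℝ) * ψd x) / (Real.sqrt (a x) : ℝ)) := by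
  have hεC : (ε : ℂ) ≠ 0 := Complex.ofReal_ne_zero.mpr hε.ne'
  set V : Set ℝ := {x | 0 < a x} with hVdef
  have hVo : IsOpen V := isOpen_lt continuous_const ha.continuous
  have hIV : Icc (0:ℝ) 1 ⊆ V := fun x hx => lt_of_lt_of_le ha₀ (haa x hx)
  have hane : ∀ x ∈ V, a x ≠ 0 := fun x hx => ne_of_gt hx
  -- basic derivative facts
  have hgd : ∀ x ∈ V, HasDerivAt (fun t => a t ^ (-(1:ℝ)/4)) (g1 a x) x := fun x hx =>
    hasDerivAt_rpow_comp ha (hane x hx) _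
  have hhd : ∀ x ∈ V, HasDerivAt (fun t => a t ^ ((1:ℝ)/4)) (h1 a x) x := fun x hx =>
    hasDerivAt_rpow_comp ha (hane x hx) _
  have hg1d : ∀ x ∈ V, HasDerivAt (g1 a) (g2 a x) x := fun x hx => hasDerivAt_g1 ha (hane x hx)
  have hbf : ∀ x ∈ V, bfun a x = -(1/(2 * a x ^ ((1:ℝ)/4))) * g2 a x := by
    intro x hx
    unfold bfun
    have hev : deriv (fun t => a t ^ (-(1:ℝ)/4)) =ᶠ[nhds x] g1 a :=
      Filter.eventuallyEq_of_mem (hVo.mem_nhds hx) (fun y hy => (hgd y hy).deriv)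
    rw [hev.deriv_eq, (hg1d x hx).deriv]
  -- continuity facts
  have hA : ContDiff ℝ (⊤ : ℕ∞) a := ha.of_le (by simp)
  have ha1c : Continuous (deriv a) := ((contDiff_infty_iff_deriv.mp hA).2.continuous)
  have ha2c : Continuous (deriv (deriv a)) :=
    ((contDiff_infty_iff_deriv.mp (contDiff_infty_iff_deriv.mp hA).2).2.continuous)
  have hrc : ∀ c : ℝ, ∀ x ∈ V, ContinuousAt (fun t => a t ^ c) x := fun c x hx =>
    (Real.continuousAt_rpow_const _ _ (Or.inl (hane x hx))).comp ha.continuous.continuousAt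
  have hg2c : ∀ x ∈ V, ContinuousAt (g2 a) x := by
    intro x hx
    unfold g2
    exact ((continuousAt_const.mul (((continuousAt_const.mul (hrc _ x hx))).mul
      ha1c.continuousAt)).mul ha1c.continuousAt).add
      ((continuousAt_const.mul (hrc _ x hx)).mul ha2c.continuousAt)
  have hbc : ∀ x ∈ V, ContinuousAt (bfun a) x := by
    intro x hx
    have hev : bfun a =ᶠ[nhds x] fun y => -(1/(2 * a y ^ ((1:ℝ)/4))) * g2 a y :=
      Filter.eventuallyEq_of_mem (hVo.mem_nhds hx) (fun y hy => hbf y hy)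
    refine ContinuousAt.congr ?_ hev.symm
    have h2ne : 2 * a x ^ ((1:ℝ)/4) ≠ 0 := by
      have : (0:ℝ) < a x ^ ((1:ℝ)/4) := Real.rpow_pos_of_pos hx _
      positivity
    exact ((continuousAt_const.div (continuousAt_const.mul (hrc _ x hx)) h2ne).neg).mul (hg2c x hx)
  -- phase derivative
  have hqc : ∀ x ∈ V, ContinuousAt (fun τ => Real.sqrt (a τ) - ε^2 * bfun a τ) x := by
    intro x hx
    exact ((Real.continuous_sqrt.continuousAt.comp ha.continuous.continuousAt).sub
      (continuousAt_const.mul (hbc x hx)))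
  have hqcOn : ContinuousOn (fun τ => Real.sqrt (a τ) - ε^2 * bfun a τ) V :=
    fun x hx => (hqc x hx).continuousWithinAt
  have hφ : ∀ x ∈ Icc (0:ℝ) 1, HasDerivAt (phase a ε)
      (Real.sqrt (a x) - ε^2 * bfun a x) x := by
    intro x hx
    unfold phase
    apply intervalIntegral.integral_hasDerivAt_right
    · apply ContinuousOn.intervalIntegrable
      intro y hy
      have : y ∈ Icc (0:ℝ) 1 := by
        rcases hy with ⟨h1y, h2y⟩
        simp only [min_le_iff, le_max_iff] at *
        constructor
        · rcases h1y with h | h <;> [exact h; linarith [hx.1]]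
        · rcases h2y with h | h <;> [linarith [hx.2]; exact le_trans h hx.2]
      exact hqcOn.continuousWithinAt (hIV this) |>.mono (fun z hz => hIV (by
        rcases hz with ⟨h1z, h2z⟩
        exact ⟨by simp only [min_le_iff] at h1z; rcases h1z with h | h <;> [exact h; linarith [hx.1]],
          by simp only [le_max_iff] at h2z; rcases h2z with h | h <;> [linarith [hx.2]; exact le_trans h hx.2]⟩))
    · exact ContinuousOn.stronglyMeasurableAtFilter hVo hqcOn x (hIV hx)
    · exact hqc x (hIV hx)
  have hφc : ∀ x ∈ Icc (0:ℝ) 1, ContinuousAt (phase a ε) x := fun x hx => (hφ x hx).continuousAt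
  have hEc : ∀ x ∈ Icc (0:ℝ) 1, ContinuousAt (Efun a ε) x := fun x hx =>
    (Efun_hasDerivAt (hφ x hx)).continuousAt
  have hFc : ∀ x ∈ Icc (0:ℝ) 1, ContinuousAt (Ffun a ε) x := fun x hx =>
    (Ffun_hasDerivAt (hφ x hx)).continuousAt
  have hZi : ∀ i : Fin 2, ∀ x ∈ Icc (0:ℝ) 1,
      HasDerivWithinAt (fun y => Z y i) (Zd x i) (Icc 0 1) x := by
    intro i x hx
    exact ((ContinuousLinearMap.proj (R := ℝ) (φ := fun _ : Fin 2 => ℂ)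
      i).hasFDerivAt.comp_hasDerivWithinAt x (hZ x hx))
  have hZic : ∀ i : Fin 2, ∀ x ∈ Icc (0:ℝ) 1,
      ContinuousWithinAt (fun y => Z y i) (Icc 0 1) x := fun i x hx =>
    (hZi i x hx).continuousWithinAt
  have hZdic : ∀ i : Fin 2, ∀ x ∈ Icc (0:ℝ) 1,
      ContinuousWithinAt (fun y => Zd y i) (Icc 0 1) x := fun i x hx =>
    (continuous_apply i).continuousAt.comp_continuousWithinAt (hZd x hx)
  -- the ODE holds in component form on all of [0,1], by continuity
  have hode0 : ∀ x ∈ Icc (0:ℝ) 1, Zd x 0 =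
      (ε:ℂ) * ((bfun a x : ℂ) * (Ffun a ε x * Ffun a ε x) * Z x 1) := by
    intro x hx
    have hIoo : ∀ y ∈ Ioo (0:ℝ) 1, Zd y 0 =
        (ε:ℂ) * ((bfun a y : ℂ) * (Ffun a ε y * Ffun a ε y) * Z y 1) := by
      intro y hy
      calc Zd y 0 = ((ε:ℂ) • (Nmat a ε y *ᵥ Z y)) 0 := congrFun (hode y hy) 0
        _ = (ε:ℂ) * ((bfun a y : ℂ) *
              Complex.exp (-(2 * Complex.I / (ε : ℂ)) * (phase a ε y : ℂ)) * Z y 1) := by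
            simp [Nmat, mulVec, dotProduct, Fin.sum_univ_two]
        _ = _ := by rw [Nexp_neg hε.ne']
    have hcr : ContinuousWithinAt (fun y => (ε:ℂ) *
        ((bfun a y : ℂ) * (Ffun a ε y * Ffun a ε y) * Z y 1)) (Icc 0 1) x := by
      apply ContinuousWithinAt.mul continuousWithinAt_const
      apply ContinuousWithinAt.mul
      · apply ContinuousWithinAt.mul
        · exact (Complex.continuous_ofReal.continuousAt.comp
            (hbc x (hIV hx))).continuousWithinAt
        · exact ((hFc x hx).continuousWithinAt.mul (hFc x hx).continuousWithinAt)
      · exact hZic 1 x hx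
    have hnb : (nhdsWithin x (Ioo (0:ℝ) 1)).NeBot := by
      apply mem_closure_iff_nhdsWithin_neBot.mp
      rw [closure_Ioo one_ne_zero.symm]
      exact hx
    haveI := hnb
    have t1 := ((hZdic 0 x hx).mono_left (nhdsWithin_mono x Ioo_subset_Icc_self))
    have t2 : Filter.Tendsto (fun y => Zd y 0) (nhdsWithin x (Ioo (0:ℝ) 1))
        (nhds ((ε:ℂ) * ((bfun a x : ℂ) * (Ffun a ε x * Ffun a ε x) * Z x 1))) := by
      refine Filter.Tendsto.congr' ?_ (hcr.mono_left (nhdsWithin_mono x Ioo_subset_Icc_self))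
      filter_upwards [self_mem_nhdsWithin] with y hy
      exact (hIoo y hy).symm
    exact tendsto_nhds_unique t1 t2
  have hode1 : ∀ x ∈ Icc (0:ℝ) 1, Zd x 1 =
      (ε:ℂ) * ((bfun a x : ℂ) * (Efun a ε x * Efun a ε x) * Z x 0) := by
    intro x hx
    have hIoo : ∀ y ∈ Ioo (0:ℝ) 1, Zd y 1 =
        (ε:ℂ) * ((bfun a y : ℂ) * (Efun a ε y * Efun a ε y) * Z y 0) := by
      intro y hy
      calc Zd y 1 = ((ε:ℂ) • (Nmat a ε y *ᵥ Z y)) 1 := congrFun (hode y hy) 1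
        _ = (ε:ℂ) * ((bfun a y : ℂ) *
              Complex.exp ((2 * Complex.I / (ε : ℂ)) * (phase a ε y : ℂ)) * Z y 0) := by
            simp [Nmat, mulVec, dotProduct, Fin.sum_univ_two]
        _ = _ := by rw [Nexp_pos hε.ne']
    have hcr : ContinuousWithinAt (fun y => (ε:ℂ) *
        ((bfun a y : ℂ) * (Efun a ε y * Efun a ε y) * Z y 0)) (Icc 0 1) x := by
      apply ContinuousWithinAt.mul continuousWithinAt_const
      apply ContinuousWithinAt.mul
      · apply ContinuousWithinAt.mul
        · exact (Complex.continuous_ofReal.continuousAt.comp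
            (hbc x (hIV hx))).continuousWithinAt
        · exact ((hEc x hx).continuousWithinAt.mul (hEc x hx).continuousWithinAt)
      · exact hZic 0 x hx
    have hnb : (nhdsWithin x (Ioo (0:ℝ) 1)).NeBot := by
      apply mem_closure_iff_nhdsWithin_neBot.mp
      rw [closure_Ioo one_ne_zero.symm]
      exact hx
    haveI := hnb
    have t1 := ((hZdic 1 x hx).mono_left (nhdsWithin_mono x Ioo_subset_Icc_self))
    have t2 : Filter.Tendsto (fun y => Zd y 1) (nhdsWithin x (Ioo (0:ℝ) 1))
        (nhds ((ε:ℂ) * ((bfun a x : ℂ) * (Efun a ε x * Efun a ε x) * Z x 0))) := by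
      refine Filter.Tendsto.congr' ?_ (hcr.mono_left (nhdsWithin_mono x Ioo_subset_Icc_self))
      filter_upwards [self_mem_nhdsWithin] with y hy
      exact (hIoo y hy).symm
    exact tendsto_nhds_unique t1 t2
  have hs2 : ((Real.sqrt 2 : ℝ) : ℂ) ≠ 0 := by
    simp [Real.sqrt_eq_zero']
  have key0 : ∀ x ∈ Icc (0:ℝ) 1, HasDerivWithinAt (fun y => Ufun a ε Z y 0)
      (((Real.sqrt (a x) / ε : ℝ) : ℂ) * Ufun a ε Z x 1) (Icc 0 1) x := by
    intro x hx
    have hfn : (fun y => Ufun a ε Z y 0) = fun y => (1 / (Real.sqrt 2 : ℂ)) *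
        (-Complex.I * (Efun a ε y * Z y 0) + Ffun a ε y * Z y 1) := funext (Ufun_zero a ε Z)
    rw [hfn]
    have hE' := (Efun_hasDerivAt (hφ x hx)).hasDerivWithinAt (s := Icc 0 1)
    have hF' := (Ffun_hasDerivAt (hφ x hx)).hasDerivWithinAt (s := Icc 0 1)
    have main := ((((hE'.mul (hZi 0 x hx)).const_mul (-Complex.I)).add
      (hF'.mul (hZi 1 x hx))).const_mul (1 / (Real.sqrt 2 : ℂ)))
    refine main.congr_deriv (Eq.symm ?_)
    have hEF : Efun a ε x * Ffun a ε x = 1 := by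
      rw [Efun, Ffun, ← Complex.exp_add]; simp
    have hee : (ε:ℂ) * (ε:ℂ)⁻¹ = 1 := mul_inv_cancel₀ hεC
    rw [Ufun_one, hode0 x hx, hode1 x hx]
    push_cast
    linear_combination
      ((1/(Real.sqrt 2:ℂ)) * ε * (bfun a x:ℂ) * Efun a ε x * Z x 0
        - (1/(Real.sqrt 2:ℂ)) * Complex.I * ε * (bfun a x:ℂ) * Ffun a ε x * Z x 1) * hee
      + (-(1/(Real.sqrt 2:ℂ)) * ε * (bfun a x:ℂ) * Efun a ε x * Z x 0
        + (1/(Real.sqrt 2:ℂ)) * Complex.I * ε * (bfun a x:ℂ) * Ffun a ε x * Z x 1) * hEF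
      + ((1/(Real.sqrt 2:ℂ)) * ((Real.sqrt (a x):ℂ) - (ε:ℂ)^2 * (bfun a x:ℂ)) * (ε:ℂ)⁻¹
          * Efun a ε x * Z x 0) * Complex.I_sq
  have key1 : ∀ x ∈ Icc (0:ℝ) 1, HasDerivWithinAt (fun y => Ufun a ε Z y 1)
      (((-(Real.sqrt (a x)) / ε + 2 * ε * bfun a x : ℝ) : ℂ) * Ufun a ε Z x 0) (Icc 0 1) x := by
    intro x hx
    have hfn : (fun y => Ufun a ε Z y 1) = fun y => (1 / (Real.sqrt 2 : ℂ)) *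
        (Efun a ε y * Z y 0 - Complex.I * (Ffun a ε y * Z y 1)) := funext (Ufun_one a ε Z)
    rw [hfn]
    have hE' := (Efun_hasDerivAt (hφ x hx)).hasDerivWithinAt (s := Icc 0 1)
    have hF' := (Ffun_hasDerivAt (hφ x hx)).hasDerivWithinAt (s := Icc 0 1)
    have main := (((hE'.mul (hZi 0 x hx)).sub
      ((hF'.mul (hZi 1 x hx)).const_mul Complex.I)).const_mul (1 / (Real.sqrt 2 : ℂ)))
    refine main.congr_deriv (Eq.symm ?_)
    have hEF : Efun a ε x * Ffun a ε x = 1 := by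
      rw [Efun, Ffun, ← Complex.exp_add]; simp
    have hee : (ε:ℂ) * (ε:ℂ)⁻¹ = 1 := mul_inv_cancel₀ hεC
    rw [Ufun_zero, hode0 x hx, hode1 x hx]
    push_cast
    linear_combination
      ((1/(Real.sqrt 2:ℂ)) * Complex.I * ε * (bfun a x:ℂ) * Efun a ε x * Z x 0
        - (1/(Real.sqrt 2:ℂ)) * ε * (bfun a x:ℂ) * Ffun a ε x * Z x 1) * hee
      + ((1/(Real.sqrt 2:ℂ)) * Complex.I * ε * (bfun a x:ℂ) * Efun a ε x * Z x 0
        - (1/(Real.sqrt 2:ℂ)) * ε * (bfun a x:ℂ) * Ffun a ε x * Z x 1) * hEF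
      + (-(1/(Real.sqrt 2:ℂ)) * ((Real.sqrt (a x):ℂ) - (ε:ℂ)^2 * (bfun a x:ℂ)) * (ε:ℂ)⁻¹
          * Ffun a ε x * Z x 1) * Complex.I_sq
  -- pointwise real identities
  have I1a : ∀ x ∈ Icc (0:ℝ) 1, a x ^ (-(1:ℝ)/4) * Real.sqrt (a x) = a x ^ ((1:ℝ)/4) := by
    intro x hx
    rw [Real.sqrt_eq_rpow, ← Real.rpow_add (hIV hx)]
    norm_num
  have I2a : ∀ x ∈ Icc (0:ℝ) 1, g1 a x * Real.sqrt (a x) = -(h1 a x) := by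
    intro x hx
    have k : a x ^ (-(1:ℝ)/4 - 1) * a x ^ ((1:ℝ)/2) = a x ^ ((1:ℝ)/4 - 1) := by
      rw [← Real.rpow_add (hIV hx)]; norm_num
    unfold g1 h1
    rw [Real.sqrt_eq_rpow]
    linear_combination (-(1:ℝ)/4 * deriv a x) * k
  have I3a : ∀ x ∈ Icc (0:ℝ) 1, a x ^ ((1:ℝ)/4) * Real.sqrt (a x) = a x * a x ^ (-(1:ℝ)/4) := by
    intro x hx
    have k1 : a x ^ ((1:ℝ)/4) * a x ^ ((1:ℝ)/2) = a x ^ ((3:ℝ)/4) := by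
      rw [← Real.rpow_add (hIV hx)]; norm_num
    have k2 : a x ^ ((1:ℝ)) * a x ^ (-(1:ℝ)/4) = a x ^ ((3:ℝ)/4) := by
      rw [← Real.rpow_add (hIV hx)]; norm_num
    have k3 : a x ^ ((1:ℝ)) = a x := Real.rpow_one _
    rw [Real.sqrt_eq_rpow]
    linear_combination k1 - k2 + (a x ^ (-(1:ℝ)/4)) * k3
  have I4a : ∀ x ∈ Icc (0:ℝ) 1, (bfun a x) * (2 * a x ^ ((1:ℝ)/4)) = -(g2 a x) := by
    intro x hx
    rw [hbf x (hIV hx)]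
    have hhne : a x ^ ((1:ℝ)/4) ≠ 0 := (Real.rpow_pos_of_pos (hIV hx) _).ne'
    field_simp
  have I5a : ∀ x ∈ Icc (0:ℝ) 1,
      h1 a x * a x ^ (-(1:ℝ)/4) + a x ^ ((1:ℝ)/4) * g1 a x = 0 := by
    intro x hx
    have k1 : a x ^ ((1:ℝ)/4 - 1) * a x ^ (-(1:ℝ)/4) = a x ^ (-(1:ℝ)) := by
      rw [← Real.rpow_add (hIV hx)]; norm_num
    have k2 : a x ^ ((1:ℝ)/4) * a x ^ (-(1:ℝ)/4 - 1) = a x ^ (-(1:ℝ)) := by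
      rw [← Real.rpow_add (hIV hx)]; norm_num
    unfold h1 g1
    linear_combination ((1:ℝ)/4 * deriv a x) * k1 - ((1:ℝ)/4 * deriv a x) * k2
  have I6a : ∀ x ∈ Icc (0:ℝ) 1,
      a x ^ ((1:ℝ)/4) * a x ^ ((1:ℝ)/4) = Real.sqrt (a x) := by
    intro x hx
    rw [Real.sqrt_eq_rpow, ← Real.rpow_add (hIV hx)]
    norm_num
  -- the candidate first and second derivatives of ψ
  set ψdf : ℝ → ℂ := fun x => ((g1 a x : ℝ) : ℂ) * Ufun a ε Z x 0
      + ((a x ^ ((1:ℝ)/4) / ε : ℝ) : ℂ) * Ufun a ε Z x 1 with hψdf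
  set ψddf : ℝ → ℂ := fun x => -(((a x : ℝ):ℂ)/(ε:ℂ)^2) * psif a ε Z x with hψddf
  have hψd : ∀ x ∈ Icc (0:ℝ) 1, HasDerivWithinAt (psif a ε Z) (ψdf x) (Icc 0 1) x := by
    intro x hx
    have hgC := ((hgd x (hIV hx)).ofReal_comp).hasDerivWithinAt (s := Icc 0 1)
    have main := hgC.mul (key0 x hx)
    show HasDerivWithinAt (fun y => ((a y ^ (-(1:ℝ)/4) : ℝ):ℂ) * Ufun a ε Z y 0) (ψdf x) (Icc 0 1) x
    refine main.congr_deriv (Eq.symm ?_)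
    rw [hψdf]
    have I1C := congrArg Complex.ofReal (I1a x hx)
    push_cast at I1C ⊢
    linear_combination (Ufun a ε Z x 1 * (ε:ℂ)⁻¹) * I1C.symm
  have hψdd : ∀ x ∈ Icc (0:ℝ) 1, HasDerivWithinAt ψdf (ψddf x) (Icc 0 1) x := by
    intro x hx
    have t1 := ((hg1d x (hIV hx)).ofReal_comp).hasDerivWithinAt (s := Icc 0 1)
    have t2 := (((hhd x (hIV hx)).div_const ε).ofReal_comp).hasDerivWithinAt (s := Icc 0 1)
    have main := (t1.mul (key0 x hx)).add (t2.mul (key1 x hx))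
    rw [hψdf, hψddf]
    refine main.congr_deriv (Eq.symm ?_)
    simp only [psif]
    have I2C := congrArg Complex.ofReal (I2a x hx)
    have I3C := congrArg Complex.ofReal (I3a x hx)
    have I4C := congrArg Complex.ofReal (I4a x hx)
    have hee : (ε:ℂ) * (ε:ℂ)⁻¹ = 1 := mul_inv_cancel₀ hεC
    push_cast at I2C I3C I4C ⊢
    linear_combination ((ε:ℂ)⁻¹^2 * Ufun a ε Z x 0) * I3C
      + (-(Ufun a ε Z x 0)) * I4C
      + (-(2*((bfun a x:ℝ):ℂ)*((a x ^ ((1:ℝ)/4):ℝ):ℂ)*Ufun a ε Z x 0)) * hee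
      + (-((ε:ℂ)⁻¹ * Ufun a ε Z x 1)) * I2C
  refine ⟨ψdf, ψddf, hψd, hψdd, ?_, ?_, ?_⟩
  · -- continuity of ψdd
    rw [hψddf]
    apply ContinuousOn.mul
    · exact (((Complex.continuous_ofReal.comp ha.continuous).continuousOn).div_const _).neg
    · exact fun x hx => (hψd x hx).continuousWithinAt
  · -- the ODE
    intro x hx
    rw [hψddf]
    field_simp
    ring
  · -- the expression for U₂
    intro x hx
    rw [show deriv (fun t => a t ^ ((1:ℝ)/4)) x = h1 a x from (hhd x (hIV hx)).deriv]
    rw [hψdf]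
    simp only [psif]
    have I5C := congrArg Complex.ofReal (I5a x hx)
    have I6C := congrArg Complex.ofReal (I6a x hx)
    have hee : (ε:ℂ) * (ε:ℂ)⁻¹ = 1 := mul_inv_cancel₀ hεC
    have hsne : ((Real.sqrt (a x) : ℝ):ℂ) ≠ 0 :=
      Complex.ofReal_ne_zero.mpr (Real.sqrt_ne_zero'.mpr (hIV hx))
    push_cast at I5C I6C ⊢
    field_simp
    rw [neg_div] at I5C
    linear_combination (-((ε:ℂ) * Ufun a ε Z x 0)) * I5C + (-(Ufun a ε Z x 1)) * I6C
end

section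
/- There exist ε_0 ∈ (0,1] and a constant C > 0, both depending only on a, such that for every ε ∈ (0, ε_0] the derivative φ'(x) = √(a(x)) − ε²b(x) is strictly positive on [0,1], and every continuously differentiable solution Z : [0,1] → ℂ² of Z'(x) = ε N^ε(x) Z(x) has oscillation amplitude of order ε²: ‖Z(x) − Z(ξ)‖ ≤ C ε² ‖Z(0)‖ for all 0 ≤ ξ ≤ x ≤ 1. -/
open Set Matrix

/- ### Auxiliary lemmas -/

lemma stmt3_bfun_smooth (a : ℝ → ℝ) (ha : ContDiff ℝ (⊤ : ℕ∞) a) :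
    ContDiffOn ℝ (⊤ : ℕ∞) (bfun a) {x | 0 < a x} := by
  set U : Set ℝ := {x | 0 < a x} with hU
  have hUo : IsOpen U := isOpen_lt continuous_const ha.continuous
  have hf : ContDiffOn ℝ (⊤ : ℕ∞) (fun t => a t ^ (-(1 : ℝ) / 4)) U := by
    intro x hx
    exact ((ha.contDiffAt.rpow_const_of_ne (ne_of_gt hx)).contDiffWithinAt)
  have hdd : ContDiffOn ℝ (⊤ : ℕ∞) (deriv (deriv (fun t => a t ^ (-(1 : ℝ) / 4)))) U := by
    have h1 : ContDiffOn ℝ (⊤ : ℕ∞) (deriv (fun t => a t ^ (-(1 : ℝ) / 4))) U :=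
      hf.deriv_of_isOpen hUo (by norm_num)
    exact h1.deriv_of_isOpen hUo (by norm_num)
  have hq : ContDiffOn ℝ (⊤ : ℕ∞) (fun x => -(1 / (2 * a x ^ ((1 : ℝ) / 4)))) U := by
    apply ContDiffOn.neg
    apply ContDiffOn.div
    · exact contDiffOn_const
    · exact contDiffOn_const.mul (fun x hx =>
        (ha.contDiffAt.rpow_const_of_ne (ne_of_gt hx)).contDiffWithinAt)
    · intro x hx
      have : (0:ℝ) < a x ^ ((1:ℝ)/4) := Real.rpow_pos_of_pos hx _
      positivity
  exact hq.mul hdd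

lemma stmt3_sqrt_smooth (a : ℝ → ℝ) (ha : ContDiff ℝ (⊤ : ℕ∞) a) :
    ContDiffOn ℝ (⊤ : ℕ∞) (fun x => Real.sqrt (a x)) {x | 0 < a x} := by
  intro x hx
  exact ((ha.contDiffAt.sqrt (ne_of_gt hx)).contDiffWithinAt)

lemma stmt3_euc_apply_le (v : EuclideanSpace ℂ (Fin 2)) (i : Fin 2) : ‖v i‖ ≤ ‖v‖ := by
  rw [EuclideanSpace.norm_eq]
  rw [show ‖v i‖ = Real.sqrt (‖v i‖^2) by rw [Real.sqrt_sq (norm_nonneg _)]]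
  apply Real.sqrt_le_sqrt
  fin_cases i <;> simp [Fin.sum_univ_two] <;> positivity

lemma stmt3_euc_le_sum (v : EuclideanSpace ℂ (Fin 2)) : ‖v‖ ≤ ‖v 0‖ + ‖v 1‖ := by
  rw [EuclideanSpace.norm_eq, Fin.sum_univ_two]
  rw [show ‖v 0‖ + ‖v 1‖ = Real.sqrt ((‖v 0‖ + ‖v 1‖)^2) by
    rw [Real.sqrt_sq (by positivity)]]
  apply Real.sqrt_le_sqrt
  nlinarith [norm_nonneg (v 0), norm_nonneg (v 1)]

lemma stmt3_comp_deriv {Z : ℝ → EuclideanSpace ℂ (Fin 2)} {v : EuclideanSpace ℂ (Fin 2)}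
    {s : Set ℝ} {x : ℝ} (h : HasDerivWithinAt Z v s x) (i : Fin 2) :
    HasDerivWithinAt (fun t => Z t i) (v i) s x := by
  have := ((EuclideanSpace.proj (𝕜 := ℂ) (ι := Fin 2) i).restrictScalars
    ℝ).hasFDerivAt.comp_hasDerivWithinAt x h
  simp at this
  exact this

lemma stmt3_exp_norm_pos (ε r : ℝ) :
    ‖Complex.exp ((2 * Complex.I / (ε : ℂ)) * (r : ℂ))‖ = 1 := by
  by_cases hε : ε = 0
  · simp [hε]
  have h : (2 * Complex.I / (ε : ℂ)) * (r : ℂ) = Complex.I * ((2 * r / ε : ℝ) : ℂ) := by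
    push_cast; field_simp
  rw [h, Complex.norm_exp]
  simp [Complex.mul_re]

lemma stmt3_exp_norm_neg (ε r : ℝ) :
    ‖Complex.exp (-(2 * Complex.I / (ε : ℂ)) * (r : ℂ))‖ = 1 := by
  by_cases hε : ε = 0
  · simp [hε]
  have h : (-(2 * Complex.I / (ε : ℂ))) * (r : ℂ) = Complex.I * ((-(2 * r) / ε : ℝ) : ℂ) := by
    push_cast; field_simp
  rw [h, Complex.norm_exp]
  simp [Complex.mul_re]

lemma stmt3_key1 (E b g de εc : ℂ) (hε : εc ≠ 0) (h2 : 2 * g * de = εc * b) :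
    Complex.I * g * (E * (-(2 * Complex.I / εc) * de)) = b * E := by
  have hI := Complex.I_sq
  field_simp
  linear_combination E * h2 - 2 * g * E * de * hI

lemma stmt3_key2 (E b g de εc : ℂ) (hε : εc ≠ 0) (h2 : 2 * g * de = εc * b) :
    -Complex.I * g * (E * ((2 * Complex.I / εc) * de)) = b * E := by
  have hI := Complex.I_sq
  field_simp
  linear_combination E * h2 - 2 * g * E * de * hI

set_option maxHeartbeats 4000000 in
/-- there exist `ε₀ ∈ (0,1]` and `C > 0`, depending only on `a`, such that for
every `ε ∈ (0,ε₀]` the derivative `φ'(x) = √(a(x)) - ε²b(x)` is strictly positive on `[0,1]`,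
and every C¹ solution of `Z' = ε N^ε Z` satisfies `‖Z(x) - Z(ξ)‖ ≤ C ε² ‖Z(0)‖` for
`0 ≤ ξ ≤ x ≤ 1` (Euclidean norm on `ℂ²`). -/
theorem stmt3 (a : ℝ → ℝ) (a₀ : ℝ) (ha : ContDiff ℝ (⊤ : ℕ∞) a) (ha₀ : 0 < a₀)
    (haa : ∀ x ∈ Icc (0 : ℝ) 1, a₀ ≤ a x) :
    ∃ ε₀ C : ℝ, 0 < ε₀ ∧ ε₀ ≤ 1 ∧ 0 < C ∧
      ∀ ε : ℝ, 0 < ε → ε ≤ ε₀ →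
        (∀ x ∈ Icc (0 : ℝ) 1, 0 < Real.sqrt (a x) - ε ^ 2 * bfun a x) ∧
        ∀ Z : ℝ → EuclideanSpace ℂ (Fin 2),
          (∀ x ∈ Icc (0 : ℝ) 1,
            HasDerivWithinAt Z (WithLp.toLp 2 ((ε : ℂ) • (Nmat a ε x *ᵥ Z x))) (Icc 0 1) x) →
          ∀ ξ x : ℝ, 0 ≤ ξ → ξ ≤ x → x ≤ 1 →
            ‖Z x - Z ξ‖ ≤ C * ε ^ 2 * ‖Z 0‖ := by
  classical
  have haI : ContDiff ℝ ((⊤ : ℕ∞) : WithTop ℕ∞) a := ha.of_le (by simp)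
  obtain ⟨U, hUdef⟩ : ∃ U : Set ℝ, U = {x | 0 < a x} := ⟨_, rfl⟩
  have hUo : IsOpen U := by
    rw [hUdef]; exact isOpen_lt continuous_const haI.continuous
  have hsub : Icc (0:ℝ) 1 ⊆ U := by
    intro x hx
    simp only [hUdef, mem_setOf_eq]
    exact lt_of_lt_of_le ha₀ (haa x hx)
  have hUpos : ∀ x ∈ U, 0 < a x := by
    intro x hx; rwa [hUdef, mem_setOf_eq] at hx
  have hbU : ContDiffOn ℝ (⊤ : ℕ∞) (bfun a) U := by
    rw [hUdef]; exact stmt3_bfun_smooth a haI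
  have hsU : ContDiffOn ℝ (⊤ : ℕ∞) (fun x => Real.sqrt (a x)) U := by
    rw [hUdef]; exact stmt3_sqrt_smooth a haI
  obtain ⟨db, hdbdef⟩ : ∃ f : ℝ → ℝ, f = deriv (bfun a) := ⟨_, rfl⟩
  obtain ⟨ds, hdsdef⟩ : ∃ f : ℝ → ℝ, f = deriv (fun x => Real.sqrt (a x)) := ⟨_, rfl⟩
  have hone : (1 : WithTop ℕ∞) ≤ ((⊤ : ℕ∞) : WithTop ℕ∞) := by exact_mod_cast le_top
  have hdbU : ContinuousOn db U := by
    rw [hdbdef]; exact hbU.continuousOn_deriv_of_isOpen hUo hone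
  have hdsU : ContinuousOn ds U := by
    rw [hdsdef]; exact hsU.continuousOn_deriv_of_isOpen hUo hone
  have hbd : ∀ x ∈ U, HasDerivAt (bfun a) (db x) x := by
    intro x hx
    rw [hdbdef]
    exact ((hbU.contDiffAt (hUo.mem_nhds hx)).differentiableAt (by simp)).hasDerivAt
  have hsd : ∀ x ∈ U, HasDerivAt (fun y => Real.sqrt (a y)) (ds x) x := by
    intro x hx
    rw [hdsdef]
    exact ((hsU.contDiffAt (hUo.mem_nhds hx)).differentiableAt (by simp)).hasDerivAt
  obtain ⟨M₀, hM₀⟩ : ∃ M₀, ∀ x ∈ Icc (0:ℝ) 1,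
      ‖|bfun a x| + |db x| + Real.sqrt (a x) + |ds x|‖ ≤ M₀ := by
    apply IsCompact.exists_bound_of_continuousOn isCompact_Icc
    exact (((hbU.continuousOn.mono hsub).abs.add ((hdbU.mono hsub).abs)).add
      (hsU.continuousOn.mono hsub)).add ((hdsU.mono hsub).abs)
  obtain ⟨M, hMdef⟩ : ∃ M : ℝ, M = max M₀ 1 := ⟨_, rfl⟩
  have hM1 : (1:ℝ) ≤ M := by rw [hMdef]; exact le_max_right _ _
  have hM0 : (0:ℝ) < M := lt_of_lt_of_le one_pos hM1
  have hbound4 : ∀ x ∈ Icc (0:ℝ) 1,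
      |bfun a x| ≤ M ∧ |db x| ≤ M ∧ Real.sqrt (a x) ≤ M ∧ |ds x| ≤ M := by
    intro x hx
    have h := hM₀ x hx
    rw [Real.norm_eq_abs] at h
    have h' : |bfun a x| + |db x| + Real.sqrt (a x) + |ds x| ≤ M₀ := (le_abs_self _).trans h
    have h1 := abs_nonneg (bfun a x)
    have h2 := abs_nonneg (db x)
    have h3 := Real.sqrt_nonneg (a x)
    have h4 := abs_nonneg (ds x)
    have h5 : M₀ ≤ M := by rw [hMdef]; exact le_max_left _ _
    exact ⟨by linarith, by linarith, by linarith, by linarith⟩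
  obtain ⟨c, hcdef⟩ : ∃ c : ℝ, c = Real.sqrt a₀ / 2 := ⟨_, rfl⟩
  have hsa0 : 0 < Real.sqrt a₀ := Real.sqrt_pos.mpr ha₀
  have hc0 : 0 < c := by rw [hcdef]; positivity
  have hsa : ∀ x ∈ Icc (0:ℝ) 1, Real.sqrt a₀ ≤ Real.sqrt (a x) := fun x hx =>
    Real.sqrt_le_sqrt (haa x hx)
  obtain ⟨ε₀, hε₀def⟩ : ∃ e : ℝ, e = min 1 (Real.sqrt a₀ / (2 * M)) := ⟨_, rfl⟩
  have hε₀pos : 0 < ε₀ := by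
    rw [hε₀def]
    exact lt_min one_pos (div_pos hsa0 (by linarith))
  have hε₀le1 : ε₀ ≤ 1 := by rw [hε₀def]; exact min_le_left _ _
  obtain ⟨Kg, hKgdef⟩ : ∃ k : ℝ, k = M / (2 * c) := ⟨_, rfl⟩
  obtain ⟨KG, hKGdef⟩ : ∃ k : ℝ, k = 2 * M ^ 2 / c ^ 2 := ⟨_, rfl⟩
  obtain ⟨K3, hK3def⟩ : ∃ k : ℝ, k = KG + Kg * M := ⟨_, rfl⟩
  obtain ⟨B, hBdef⟩ : ∃ b : ℝ, b = Real.exp M := ⟨_, rfl⟩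
  obtain ⟨C, hCdef⟩ : ∃ cc : ℝ, cc = 2 * (K3 + 2 * Kg) * B + 1 := ⟨_, rfl⟩
  have hKg0 : 0 < Kg := by rw [hKgdef]; exact div_pos hM0 (by linarith)
  have hKG0 : 0 < KG := by
    rw [hKGdef]; exact div_pos (by nlinarith) (pow_pos hc0 2)
  have hK30 : 0 < K3 := by rw [hK3def]; nlinarith
  have hB0 : 0 < B := by rw [hBdef]; exact Real.exp_pos M
  have hC0 : 0 < C := by rw [hCdef]; nlinarith
  refine ⟨ε₀, C, hε₀pos, hε₀le1, hC0, ?_⟩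
  intro ε hε hεε₀
  have hε1 : ε ≤ 1 := hεε₀.trans hε₀le1
  have hεsq : ε ^ 2 ≤ ε := by nlinarith
  have hεsq1 : ε ^ 2 ≤ 1 := by nlinarith
  have hεε₀' : ε ≤ Real.sqrt a₀ / (2 * M) := by
    rw [hε₀def] at hεε₀
    exact hεε₀.trans (min_le_right _ _)
  have hde_lb : ∀ x ∈ Icc (0:ℝ) 1, c ≤ Real.sqrt (a x) - ε ^ 2 * bfun a x := by
    intro x hx
    have h1 := hsa x hx
    have h2 := (hbound4 x hx).1
    have h4 : ε ^ 2 * |bfun a x| ≤ Real.sqrt a₀ / 2 := by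
      have h5 : ε ^ 2 ≤ Real.sqrt a₀ / (2 * M) := hεsq.trans hεε₀'
      calc ε ^ 2 * |bfun a x| ≤ (Real.sqrt a₀ / (2 * M)) * M :=
            mul_le_mul h5 h2 (abs_nonneg _) (le_of_lt (div_pos hsa0 (by linarith)))
        _ = Real.sqrt a₀ / 2 := by field_simp
    have h6 : ε ^ 2 * bfun a x ≤ Real.sqrt a₀ / 2 := by
      have := le_abs_self (ε ^ 2 * bfun a x)
      rw [abs_mul, abs_of_nonneg (sq_nonneg ε)] at this
      linarith
    rw [hcdef]; linarith
  have hdepos : ∀ x ∈ Icc (0:ℝ) 1, 0 < Real.sqrt (a x) - ε ^ 2 * bfun a x := fun x hx =>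
    lt_of_lt_of_le hc0 (hde_lb x hx)
  refine ⟨hdepos, ?_⟩
  intro Z hZ ξ x hξ0 hξx hx1
  have hxI : x ∈ Icc (0:ℝ) 1 := ⟨hξ0.trans hξx, hx1⟩
  have hξI : ξ ∈ Icc (0:ℝ) 1 := ⟨hξ0, hξx.trans hx1⟩
  -- local abbreviations
  obtain ⟨de, hdedef⟩ : ∃ f : ℝ → ℝ, f = fun t => Real.sqrt (a t) - ε ^ 2 * bfun a t := ⟨_, rfl⟩
  obtain ⟨g, hgdef⟩ : ∃ f : ℝ → ℝ, f = fun t => ε * bfun a t / (2 * de t) := ⟨_, rfl⟩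
  obtain ⟨Gf, hGdef⟩ : ∃ f : ℝ → ℝ, f = fun t =>
    (ε * db t * (2 * de t) - ε * bfun a t * (2 * (ds t - ε ^ 2 * db t))) / (2 * de t) ^ 2 :=
    ⟨_, rfl⟩
  obtain ⟨Epos, hEposdef⟩ : ∃ f : ℝ → ℂ, f = fun t =>
    Complex.exp ((2 * Complex.I / (ε : ℂ)) * (phase a ε t : ℂ)) := ⟨_, rfl⟩
  obtain ⟨Eneg, hEnegdef⟩ : ∃ f : ℝ → ℂ, f = fun t =>
    Complex.exp (-(2 * Complex.I / (ε : ℂ)) * (phase a ε t : ℂ)) := ⟨_, rfl⟩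
  have hdeval : ∀ t : ℝ, de t = Real.sqrt (a t) - ε ^ 2 * bfun a t := by
    intro t; rw [hdedef]
  have hdeL : ∀ t ∈ Icc (0:ℝ) 1, c ≤ de t := by
    intro t ht; rw [hdeval]; exact hde_lb t ht
  have hdeP : ∀ t ∈ Icc (0:ℝ) 1, 0 < de t := by
    intro t ht; rw [hdeval]; exact hdepos t ht
  have hdeU2 : ∀ t ∈ Icc (0:ℝ) 1, de t ≤ 2 * M := by
    intro t ht
    obtain ⟨hb, _, hs, _⟩ := hbound4 t ht
    have h6 : ε ^ 2 * bfun a t ≥ -(ε ^ 2 * |bfun a t|) := by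
      have := neg_abs_le (ε ^ 2 * bfun a t)
      rw [abs_mul, abs_of_nonneg (sq_nonneg ε)] at this
      linarith
    have h7 : ε ^ 2 * |bfun a t| ≤ M := by nlinarith [abs_nonneg (bfun a t)]
    rw [hdeval]
    nlinarith
  have hdeNe : ∀ t ∈ Icc (0:ℝ) 1, de t ≠ 0 := fun t ht => ne_of_gt (hdeP t ht)
  -- pointwise derivatives
  have hdeD : ∀ t ∈ Icc (0:ℝ) 1, HasDerivAt de (ds t - ε ^ 2 * db t) t := by
    intro t ht
    rw [hdedef]
    exact (hsd t (hsub ht)).sub ((hbd t (hsub ht)).const_mul (ε ^ 2))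
  have hgD : ∀ t ∈ Icc (0:ℝ) 1, HasDerivAt g (Gf t) t := by
    intro t ht
    have h1 : HasDerivAt (fun y => ε * bfun a y) (ε * db t) t := (hbd t (hsub ht)).const_mul ε
    have h2 : HasDerivAt (fun y => 2 * de y) (2 * (ds t - ε ^ 2 * db t)) t :=
      (hdeD t ht).const_mul 2
    have h3 : (2 : ℝ) * de t ≠ 0 := by
      have := hdeP t ht; linarith
    simp only [hgdef, hGdef]
    exact h1.div h2 h3
  have hcontInt : ContinuousOn (fun τ => Real.sqrt (a τ) - ε ^ 2 * bfun a τ) U :=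
    (hsU.continuousOn).sub (continuousOn_const.mul hbU.continuousOn)
  have hph : ∀ t ∈ Icc (0:ℝ) 1, HasDerivAt (phase a ε) (de t) t := by
    intro t ht
    have hint : IntervalIntegrable (fun τ => Real.sqrt (a τ) - ε ^ 2 * bfun a τ)
        MeasureTheory.volume 0 t := by
      apply ContinuousOn.intervalIntegrable
      apply hcontInt.mono
      intro y hy
      apply hsub
      rw [uIcc_of_le ht.1] at hy
      exact ⟨hy.1, le_trans hy.2 ht.2⟩
    have hmeas := (ContinuousOn.stronglyMeasurableAtFilter (μ := MeasureTheory.volume)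
      hUo hcontInt) t (hsub ht)
    have hct : ContinuousAt (fun τ => Real.sqrt (a τ) - ε ^ 2 * bfun a τ) t :=
      (hcontInt t (hsub ht)).continuousAt (hUo.mem_nhds (hsub ht))
    rw [hdeval]
    exact intervalIntegral.integral_hasDerivAt_right hint hmeas hct
  have hEposD : ∀ t ∈ Icc (0:ℝ) 1,
      HasDerivAt Epos (Epos t * ((2 * Complex.I / (ε : ℂ)) * (de t : ℂ))) t := by
    intro t ht
    have h1 : HasDerivAt (fun y => ((phase a ε y : ℝ) : ℂ)) ((de t : ℝ) : ℂ) t :=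
      (hph t ht).ofReal_comp
    simp only [hEposdef]
    exact (h1.const_mul (2 * Complex.I / (ε : ℂ))).cexp
  have hEnegD : ∀ t ∈ Icc (0:ℝ) 1,
      HasDerivAt Eneg (Eneg t * (-(2 * Complex.I / (ε : ℂ)) * (de t : ℂ))) t := by
    intro t ht
    have h1 : HasDerivAt (fun y => ((phase a ε y : ℝ) : ℂ)) ((de t : ℝ) : ℂ) t :=
      (hph t ht).ofReal_comp
    simp only [hEnegdef]
    exact (h1.const_mul (-(2 * Complex.I / (ε : ℂ)))).cexp
  have hnr : ∀ r : ℝ, ‖(r : ℂ)‖ = |r| := fun r => by simp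
  have hEp1 : ∀ t : ℝ, ‖Epos t‖ = 1 := by
    intro t; simp only [hEposdef]; exact stmt3_exp_norm_pos ε (phase a ε t)
  have hEn1 : ∀ t : ℝ, ‖Eneg t‖ = 1 := by
    intro t; simp only [hEnegdef]; exact stmt3_exp_norm_neg ε (phase a ε t)
  -- matrix norm bound
  have hNn : ∀ t ∈ Icc (0:ℝ) 1, ∀ v w : EuclideanSpace ℂ (Fin 2), w = Nmat a ε t *ᵥ v →
      ‖w‖ ≤ M * ‖v‖ := by
    intro t ht v w hw
    have h0 : w 0 = (bfun a t : ℂ) * Eneg t * v 1 := by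
      rw [hw]
      simp [Nmat, Matrix.mulVec, dotProduct, Matrix.vecHead, Matrix.vecTail, Fin.sum_univ_two, hEnegdef]
    have h1 : w 1 = (bfun a t : ℂ) * Epos t * v 0 := by
      rw [hw]
      simp [Nmat, Matrix.mulVec, dotProduct, Matrix.vecHead, Matrix.vecTail, Fin.sum_univ_two, hEposdef]
    have hn0 : ‖w 0‖ = |bfun a t| * ‖v 1‖ := by
      rw [h0, norm_mul, norm_mul, hEn1, hnr, mul_one]
    have hn1 : ‖w 1‖ = |bfun a t| * ‖v 0‖ := by
      rw [h1, norm_mul, norm_mul, hEp1, hnr, mul_one]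
    have hnv : ‖w‖ = Real.sqrt (‖w 0‖ ^ 2 + ‖w 1‖ ^ 2) := by
      rw [EuclideanSpace.norm_eq, Fin.sum_univ_two]
    have hvv : ‖v‖ = Real.sqrt (‖v 0‖ ^ 2 + ‖v 1‖ ^ 2) := by
      rw [EuclideanSpace.norm_eq, Fin.sum_univ_two]
    rw [hnv, hn0, hn1, hvv,
      show M * Real.sqrt (‖v 0‖ ^ 2 + ‖v 1‖ ^ 2)
        = Real.sqrt (M ^ 2 * (‖v 0‖ ^ 2 + ‖v 1‖ ^ 2)) by
        rw [Real.sqrt_mul (sq_nonneg M), Real.sqrt_sq hM0.le]]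
    apply Real.sqrt_le_sqrt
    have hb := (hbound4 t ht).1
    have hbb : |bfun a t| ^ 2 ≤ M ^ 2 := by nlinarith [abs_nonneg (bfun a t)]
    nlinarith [sq_nonneg ‖v 0‖, sq_nonneg ‖v 1‖, abs_nonneg (bfun a t)]
  -- Gronwall bound
  have hZcont : ContinuousOn Z (Icc 0 1) := fun t ht => (hZ t ht).continuousWithinAt
  have hgrow : ∀ t ∈ Icc (0:ℝ) 1, ‖Z t‖ ≤ B * ‖Z 0‖ := by
    have hder : ∀ y ∈ Ico (0:ℝ) 1,
        HasDerivWithinAt Z (WithLp.toLp 2 ((ε : ℂ) • (Nmat a ε y *ᵥ Z y))) (Ici y) y := fun y hy =>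
      (hZ y (Ico_subset_Icc_self hy)).mono_of_mem_nhdsWithin (Icc_mem_nhdsGE_of_mem hy)
    have hG : ∀ t ∈ Icc (0:ℝ) 1, ‖Z t‖ ≤ gronwallBound ‖Z 0‖ M 0 (t - 0) := by
      refine norm_le_gronwallBound_of_norm_deriv_right_le hZcont hder le_rfl ?_
      intro y hy
      rw [WithLp.toLp_smul, norm_smul, hnr, abs_of_pos hε, add_zero]
      have h2 := hNn y (Ico_subset_Icc_self hy) (Z y) (WithLp.toLp 2 (Nmat a ε y *ᵥ Z y)) rfl
      have h3 : (0:ℝ) ≤ ‖Z y‖ := norm_nonneg _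
      nlinarith [mul_le_mul_of_nonneg_left h2 hε.le,
        mul_nonneg (mul_nonneg (by linarith : (0:ℝ) ≤ 1 - ε) hM0.le) h3]
    intro t ht
    have hGt := hG t ht
    rw [gronwallBound_ε0, sub_zero] at hGt
    have h4 : Real.exp (M * t) ≤ Real.exp M :=
      Real.exp_le_exp.mpr (by nlinarith [ht.1, ht.2])
    calc ‖Z t‖ ≤ ‖Z 0‖ * Real.exp (M * t) := hGt
      _ ≤ ‖Z 0‖ * Real.exp M := mul_le_mul_of_nonneg_left h4 (norm_nonneg _)
      _ = B * ‖Z 0‖ := by rw [hBdef]; ring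
  -- component derivatives
  have hZ1 : ∀ t ∈ Icc (0:ℝ) 1, HasDerivWithinAt (fun y => Z y 0)
      ((ε : ℂ) * ((bfun a t : ℂ) * Eneg t) * Z t 1) (Icc 0 1) t := by
    intro t ht
    have h := stmt3_comp_deriv (hZ t ht) 0
    rw [WithLp.ofLp_toLp] at h
    have hv : ((ε : ℂ) • (Nmat a ε t *ᵥ Z t)) 0
        = (ε : ℂ) * ((bfun a t : ℂ) * Eneg t) * Z t 1 := by
      have h0 : (Nmat a ε t *ᵥ Z t) 0 = (bfun a t : ℂ) * Eneg t * Z t 1 := by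
        simp [Nmat, Matrix.mulVec, dotProduct, Matrix.vecHead, Matrix.vecTail, Fin.sum_univ_two, hEnegdef]
      calc ((ε : ℂ) • (Nmat a ε t *ᵥ Z t)) 0 = (ε : ℂ) * (Nmat a ε t *ᵥ Z t) 0 := rfl
        _ = _ := by rw [h0]; ring
    rwa [hv] at h
  have hZ2 : ∀ t ∈ Icc (0:ℝ) 1, HasDerivWithinAt (fun y => Z y 1)
      ((ε : ℂ) * ((bfun a t : ℂ) * Epos t) * Z t 0) (Icc 0 1) t := by
    intro t ht
    have h := stmt3_comp_deriv (hZ t ht) 1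
    rw [WithLp.ofLp_toLp] at h
    have hv : ((ε : ℂ) • (Nmat a ε t *ᵥ Z t)) 1
        = (ε : ℂ) * ((bfun a t : ℂ) * Epos t) * Z t 0 := by
      have h0 : (Nmat a ε t *ᵥ Z t) 1 = (bfun a t : ℂ) * Epos t * Z t 0 := by
        simp [Nmat, Matrix.mulVec, dotProduct, Matrix.vecHead, Matrix.vecTail, Fin.sum_univ_two, hEposdef]
      calc ((ε : ℂ) • (Nmat a ε t *ᵥ Z t)) 1 = (ε : ℂ) * (Nmat a ε t *ᵥ Z t) 1 := rfl
        _ = _ := by rw [h0]; ring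
    rwa [hv] at h
  -- the elementary identity 2 g de = ε b
  have hgde : ∀ t ∈ Icc (0:ℝ) 1,
      2 * ((g t : ℝ) : ℂ) * ((de t : ℝ) : ℂ) = ((ε : ℝ) : ℂ) * ((bfun a t : ℝ) : ℂ) := by
    intro t ht
    have hne2 : de t ≠ 0 := hdeNe t ht
    have h : 2 * g t * de t = ε * bfun a t := by
      rw [hgdef]
      field_simp
    exact_mod_cast congrArg (fun r : ℝ => (r : ℂ)) h
  have hεC : ((ε : ℝ) : ℂ) ≠ 0 := by exact_mod_cast ne_of_gt hε
  -- corrected functions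
  obtain ⟨R1, hR1def⟩ : ∃ f : ℝ → ℂ, f = fun t => Complex.I * ((g t : ℝ) : ℂ) * Eneg t :=
    ⟨_, rfl⟩
  obtain ⟨R2, hR2def⟩ : ∃ f : ℝ → ℂ, f = fun t => -Complex.I * ((g t : ℝ) : ℂ) * Epos t :=
    ⟨_, rfl⟩
  have hR1D : ∀ t ∈ Icc (0:ℝ) 1, HasDerivAt R1
      (Complex.I * ((Gf t : ℝ) : ℂ) * Eneg t + ((bfun a t : ℝ) : ℂ) * Eneg t) t := by
    intro t ht
    have h1 : HasDerivAt (fun y => Complex.I * ((g y : ℝ) : ℂ))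
        (Complex.I * ((Gf t : ℝ) : ℂ)) t := ((hgD t ht).ofReal_comp).const_mul Complex.I
    have h2 := h1.mul (hEnegD t ht)
    have hval : Complex.I * ((Gf t : ℝ) : ℂ) * Eneg t
          + Complex.I * ((g t : ℝ) : ℂ) * (Eneg t * (-(2 * Complex.I / (ε : ℂ)) * ((de t : ℝ) : ℂ)))
        = Complex.I * ((Gf t : ℝ) : ℂ) * Eneg t + ((bfun a t : ℝ) : ℂ) * Eneg t := by
      rw [stmt3_key1 (Eneg t) _ _ _ _ hεC (hgde t ht)]
    rw [hval] at h2
    rw [hR1def]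
    exact h2
  have hR2D : ∀ t ∈ Icc (0:ℝ) 1, HasDerivAt R2
      (-Complex.I * ((Gf t : ℝ) : ℂ) * Epos t + ((bfun a t : ℝ) : ℂ) * Epos t) t := by
    intro t ht
    have h1 : HasDerivAt (fun y => -Complex.I * ((g y : ℝ) : ℂ))
        (-Complex.I * ((Gf t : ℝ) : ℂ)) t := ((hgD t ht).ofReal_comp).const_mul (-Complex.I)
    have h2 := h1.mul (hEposD t ht)
    have hval : -Complex.I * ((Gf t : ℝ) : ℂ) * Epos t
          + -Complex.I * ((g t : ℝ) : ℂ) * (Epos t * ((2 * Complex.I / (ε : ℂ)) * ((de t : ℝ) : ℂ)))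
        = -Complex.I * ((Gf t : ℝ) : ℂ) * Epos t + ((bfun a t : ℝ) : ℂ) * Epos t := by
      rw [stmt3_key2 (Epos t) _ _ _ _ hεC (hgde t ht)]
    rw [hval] at h2
    rw [hR2def]
    exact h2
  obtain ⟨W1, hW1def⟩ : ∃ f : ℝ → ℂ, f = fun t => Z t 0 - (ε : ℂ) * (R1 t * Z t 1) := ⟨_, rfl⟩
  obtain ⟨W2, hW2def⟩ : ∃ f : ℝ → ℂ, f = fun t => Z t 1 - (ε : ℂ) * (R2 t * Z t 0) := ⟨_, rfl⟩
  obtain ⟨D1, hD1def⟩ : ∃ f : ℝ → ℂ, f = fun t => (ε : ℂ) * ((bfun a t : ℂ) * Eneg t) * Z t 1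
    - (ε : ℂ) * ((Complex.I * ((Gf t : ℝ) : ℂ) * Eneg t + ((bfun a t : ℝ) : ℂ) * Eneg t) * Z t 1
        + R1 t * ((ε : ℂ) * ((bfun a t : ℂ) * Epos t) * Z t 0)) := ⟨_, rfl⟩
  obtain ⟨D2, hD2def⟩ : ∃ f : ℝ → ℂ, f = fun t => (ε : ℂ) * ((bfun a t : ℂ) * Epos t) * Z t 0
    - (ε : ℂ) * ((-Complex.I * ((Gf t : ℝ) : ℂ) * Epos t + ((bfun a t : ℝ) : ℂ) * Epos t) * Z t 0
        + R2 t * ((ε : ℂ) * ((bfun a t : ℂ) * Eneg t) * Z t 1)) := ⟨_, rfl⟩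
  have hW1D : ∀ t ∈ Icc (0:ℝ) 1, HasDerivWithinAt W1 (D1 t) (Icc 0 1) t := by
    intro t ht
    rw [hW1def, hD1def]
    exact (hZ1 t ht).sub
      ((((hR1D t ht).hasDerivWithinAt).mul (hZ2 t ht)).const_mul ((ε : ℝ) : ℂ))
  have hW2D : ∀ t ∈ Icc (0:ℝ) 1, HasDerivWithinAt W2 (D2 t) (Icc 0 1) t := by
    intro t ht
    rw [hW2def, hD2def]
    exact (hZ2 t ht).sub
      ((((hR2D t ht).hasDerivWithinAt).mul (hZ1 t ht)).const_mul ((ε : ℝ) : ℂ))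
  have hEE : ∀ t : ℝ, Eneg t * Epos t = 1 := by
    intro t
    rw [hEnegdef, hEposdef]
    simp only
    rw [← Complex.exp_add,
      show -(2 * Complex.I / (ε : ℂ)) * (phase a ε t : ℂ)
          + (2 * Complex.I / (ε : ℂ)) * (phase a ε t : ℂ) = 0 by ring,
      Complex.exp_zero]
  have hD1eq : ∀ t : ℝ, D1 t = -((ε : ℂ) * Complex.I * ((Gf t : ℝ) : ℂ) * Eneg t * Z t 1)
      - (ε : ℂ) ^ 2 * Complex.I * ((g t : ℝ) : ℂ) * ((bfun a t : ℝ) : ℂ) * Z t 0 := by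
    intro t
    simp only [hD1def, hR1def]
    linear_combination (-((ε:ℂ) ^ 2 * Complex.I * ((g t : ℝ) : ℂ) * ((bfun a t : ℝ) : ℂ)
      * Z t 0)) * hEE t
  have hD2eq : ∀ t : ℝ, D2 t = (ε : ℂ) * Complex.I * ((Gf t : ℝ) : ℂ) * Epos t * Z t 0
      + (ε : ℂ) ^ 2 * Complex.I * ((g t : ℝ) : ℂ) * ((bfun a t : ℝ) : ℂ) * Z t 1 := by
    intro t
    simp only [hD2def, hR2def]
    linear_combination ((ε:ℂ) ^ 2 * Complex.I * ((g t : ℝ) : ℂ) * ((bfun a t : ℝ) : ℂ)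
      * Z t 1) * hEE t
  -- quantitative bounds on g and Gf
  have hgb : ∀ t ∈ Icc (0:ℝ) 1, |g t| ≤ ε * Kg := by
    intro t ht
    have hb := (hbound4 t ht).1
    have hd := hdeL t ht
    have hdp := hdeP t ht
    have hgeq : |g t| = ε * |bfun a t| / (2 * de t) := by
      rw [hgdef]
      simp only
      rw [abs_div, abs_mul, abs_of_pos hε, abs_of_pos (by linarith : (0:ℝ) < 2 * de t)]
    rw [hgeq, show ε * Kg = ε * M / (2 * c) by rw [hKgdef]; ring]
    apply div_le_div₀ (mul_nonneg hε.le hM0.le)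
      (mul_le_mul_of_nonneg_left hb hε.le) (by linarith) (by linarith)
  have hGb : ∀ t ∈ Icc (0:ℝ) 1, |Gf t| ≤ ε * KG := by
    intro t ht
    obtain ⟨hb, hdb, hs, hds⟩ := hbound4 t ht
    have hd := hdeL t ht
    have hd2 := hdeU2 t ht
    have hdpos := hdeP t ht
    have e1 : |ε * db t * (2 * de t)| ≤ ε * (4 * M ^ 2) := by
      rw [abs_mul, abs_mul, abs_of_pos hε, abs_of_nonneg (by linarith : (0:ℝ) ≤ 2 * de t)]
      have h9 : |db t| * (2 * de t) ≤ M * (2 * (2 * M)) :=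
        mul_le_mul hdb (by linarith) (by linarith) hM0.le
      nlinarith [abs_nonneg (db t)]
    have e2 : |ε * bfun a t * (2 * (ds t - ε ^ 2 * db t))| ≤ ε * (4 * M ^ 2) := by
      have hin : |ds t - ε ^ 2 * db t| ≤ 2 * M := by
        have h1 := abs_sub (ds t) (ε ^ 2 * db t)
        rw [abs_mul, abs_of_nonneg (sq_nonneg ε)] at h1
        nlinarith [abs_nonneg (db t)]
      rw [abs_mul, abs_mul, abs_of_pos hε,
        show |2 * (ds t - ε ^ 2 * db t)| = |(2:ℝ)| * |ds t - ε ^ 2 * db t| from abs_mul _ _,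
        abs_two]
      have h9 : |bfun a t| * (2 * |ds t - ε ^ 2 * db t|) ≤ M * (2 * (2 * M)) :=
        mul_le_mul hb (by linarith) (by positivity) hM0.le
      nlinarith [abs_nonneg (bfun a t)]
    have hnum : |ε * db t * (2 * de t) - ε * bfun a t * (2 * (ds t - ε ^ 2 * db t))|
        ≤ ε * (8 * M ^ 2) := by
      have h8 := abs_sub (ε * db t * (2 * de t)) (ε * bfun a t * (2 * (ds t - ε ^ 2 * db t)))
      linarith
    have hGeq : |Gf t| = |ε * db t * (2 * de t) - ε * bfun a t * (2 * (ds t - ε ^ 2 * db t))|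
        / (2 * de t) ^ 2 := by
      rw [hGdef]
      simp only
      rw [abs_div, abs_of_nonneg (sq_nonneg (2 * de t))]
    rw [hGeq, div_le_iff₀ (pow_pos (by linarith : (0:ℝ) < 2 * de t) 2)]
    have hsq : (2 * c) ^ 2 ≤ (2 * de t) ^ 2 := by
      have h1 : (0:ℝ) ≤ 2 * c := by linarith
      have h2 : 2 * c ≤ 2 * de t := by linarith
      exact pow_le_pow_left₀ h1 h2 2
    have hKGc : KG * (2 * c) ^ 2 = 8 * M ^ 2 := by
      rw [hKGdef]
      field_simp
      ring
    calc |ε * db t * (2 * de t) - ε * bfun a t * (2 * (ds t - ε ^ 2 * db t))|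
        ≤ ε * (8 * M ^ 2) := hnum
      _ = ε * (KG * (2 * c) ^ 2) := by rw [hKGc]
      _ ≤ ε * (KG * (2 * de t) ^ 2) :=
          mul_le_mul_of_nonneg_left (mul_le_mul_of_nonneg_left hsq hKG0.le) hε.le
      _ = ε * KG * (2 * de t) ^ 2 := by ring
  -- norm bound for D1, D2
  have hZb : ∀ t ∈ Icc (0:ℝ) 1, ‖Z t 0‖ ≤ B * ‖Z 0‖ ∧ ‖Z t 1‖ ≤ B * ‖Z 0‖ := by
    intro t ht
    exact ⟨(stmt3_euc_apply_le (Z t) 0).trans (hgrow t ht),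
      (stmt3_euc_apply_le (Z t) 1).trans (hgrow t ht)⟩
  have hBZ0 : (0:ℝ) ≤ B * ‖Z 0‖ := mul_nonneg hB0.le (norm_nonneg _)
  have hDb : ∀ t ∈ Icc (0:ℝ) 1, ‖D1 t‖ ≤ ε ^ 2 * K3 * (B * ‖Z 0‖)
      ∧ ‖D2 t‖ ≤ ε ^ 2 * K3 * (B * ‖Z 0‖) := by
    intro t ht
    obtain ⟨hZ0b, hZ1b⟩ := hZb t ht
    have hgbt := hgb t ht
    have hGbt := hGb t ht
    have hbt := (hbound4 t ht).1
    have hn1 : ‖(ε : ℂ) * Complex.I * ((Gf t : ℝ) : ℂ) * Eneg t * Z t 1‖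
        = ε * |Gf t| * ‖Z t 1‖ := by
      rw [norm_mul, norm_mul, norm_mul, norm_mul, hnr, hnr, Complex.norm_I, hEn1,
        abs_of_pos hε]
      ring
    have hn2 : ‖(ε : ℂ) ^ 2 * Complex.I * ((g t : ℝ) : ℂ) * ((bfun a t : ℝ) : ℂ) * Z t 0‖
        = ε ^ 2 * |g t| * |bfun a t| * ‖Z t 0‖ := by
      rw [norm_mul, norm_mul, norm_mul, norm_mul, norm_pow, hnr, hnr, hnr, Complex.norm_I,
        abs_of_pos hε]
      ring
    have hn1' : ‖(ε : ℂ) * Complex.I * ((Gf t : ℝ) : ℂ) * Epos t * Z t 0‖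
        = ε * |Gf t| * ‖Z t 0‖ := by
      rw [norm_mul, norm_mul, norm_mul, norm_mul, hnr, hnr, Complex.norm_I, hEp1,
        abs_of_pos hε]
      ring
    have hn2' : ‖(ε : ℂ) ^ 2 * Complex.I * ((g t : ℝ) : ℂ) * ((bfun a t : ℝ) : ℂ) * Z t 1‖
        = ε ^ 2 * |g t| * |bfun a t| * ‖Z t 1‖ := by
      rw [norm_mul, norm_mul, norm_mul, norm_mul, norm_pow, hnr, hnr, hnr, Complex.norm_I,
        abs_of_pos hε]
      ring
    have key : ∀ u v : ℝ, u ≤ ε * |Gf t| * (B * ‖Z 0‖) → v ≤ ε ^ 2 * |g t| * |bfun a t| * (B * ‖Z 0‖)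
        → u + v ≤ ε ^ 2 * K3 * (B * ‖Z 0‖) := by
      intro u v hu hv
      have c1 : ε * |Gf t| * (B * ‖Z 0‖) ≤ ε ^ 2 * KG * (B * ‖Z 0‖) := by
        have h9 : ε * |Gf t| ≤ ε ^ 2 * KG := by
          linarith [mul_le_mul_of_nonneg_left hGbt hε.le]
        exact mul_le_mul_of_nonneg_right h9 hBZ0
      have c2 : ε ^ 2 * |g t| * |bfun a t| * (B * ‖Z 0‖)
          ≤ ε ^ 2 * (Kg * M) * (B * ‖Z 0‖) := by
        have h1 : |g t| * |bfun a t| ≤ (ε * Kg) * M :=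
          mul_le_mul hgbt hbt (abs_nonneg _) (mul_nonneg hε.le hKg0.le)
        have h2 : (ε * Kg) * M ≤ Kg * M := by
          linarith [mul_nonneg (mul_nonneg (by linarith : (0:ℝ) ≤ 1 - ε) hKg0.le) hM0.le]
        have h3 : ε ^ 2 * (|g t| * |bfun a t|) ≤ ε ^ 2 * (Kg * M) :=
          mul_le_mul_of_nonneg_left (h1.trans h2) (sq_nonneg ε)
        linarith [mul_le_mul_of_nonneg_right h3 hBZ0]
      rw [hK3def]
      linarith
    constructor
    · rw [hD1eq t]
      calc ‖-((ε : ℂ) * Complex.I * ((Gf t : ℝ) : ℂ) * Eneg t * Z t 1)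
            - (ε : ℂ) ^ 2 * Complex.I * ((g t : ℝ) : ℂ) * ((bfun a t : ℝ) : ℂ) * Z t 0‖
          ≤ ‖-((ε : ℂ) * Complex.I * ((Gf t : ℝ) : ℂ) * Eneg t * Z t 1)‖
            + ‖(ε : ℂ) ^ 2 * Complex.I * ((g t : ℝ) : ℂ) * ((bfun a t : ℝ) : ℂ) * Z t 0‖ :=
            norm_sub_le _ _
        _ ≤ ε ^ 2 * K3 * (B * ‖Z 0‖) := by
            rw [norm_neg, hn1, hn2]
            apply key
            · have h9 : ε * |Gf t| * ‖Z t 1‖ ≤ ε * |Gf t| * (B * ‖Z 0‖) :=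
                mul_le_mul_of_nonneg_left hZ1b (mul_nonneg hε.le (abs_nonneg _))
              linarith
            · have h9 : ε ^ 2 * |g t| * |bfun a t| * ‖Z t 0‖
                  ≤ ε ^ 2 * |g t| * |bfun a t| * (B * ‖Z 0‖) :=
                mul_le_mul_of_nonneg_left hZ0b
                  (mul_nonneg (mul_nonneg (sq_nonneg ε) (abs_nonneg _)) (abs_nonneg _))
              linarith
    · rw [hD2eq t]
      calc ‖(ε : ℂ) * Complex.I * ((Gf t : ℝ) : ℂ) * Epos t * Z t 0
            + (ε : ℂ) ^ 2 * Complex.I * ((g t : ℝ) : ℂ) * ((bfun a t : ℝ) : ℂ) * Z t 1‖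
          ≤ ‖(ε : ℂ) * Complex.I * ((Gf t : ℝ) : ℂ) * Epos t * Z t 0‖
            + ‖(ε : ℂ) ^ 2 * Complex.I * ((g t : ℝ) : ℂ) * ((bfun a t : ℝ) : ℂ) * Z t 1‖ :=
            norm_add_le _ _
        _ ≤ ε ^ 2 * K3 * (B * ‖Z 0‖) := by
            rw [hn1', hn2']
            apply key
            · have h9 : ε * |Gf t| * ‖Z t 0‖ ≤ ε * |Gf t| * (B * ‖Z 0‖) :=
                mul_le_mul_of_nonneg_left hZ0b (mul_nonneg hε.le (abs_nonneg _))
              linarith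
            · have h9 : ε ^ 2 * |g t| * |bfun a t| * ‖Z t 1‖
                  ≤ ε ^ 2 * |g t| * |bfun a t| * (B * ‖Z 0‖) :=
                mul_le_mul_of_nonneg_left hZ1b
                  (mul_nonneg (mul_nonneg (sq_nonneg ε) (abs_nonneg _)) (abs_nonneg _))
              linarith
  -- mean value estimates
  have hMW1 : ‖W1 x - W1 ξ‖ ≤ ε ^ 2 * K3 * (B * ‖Z 0‖) * ‖x - ξ‖ :=
    (convex_Icc (0:ℝ) 1).norm_image_sub_le_of_norm_hasDerivWithin_le hW1D
      (fun t ht => (hDb t ht).1) hξI hxI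
  have hMW2 : ‖W2 x - W2 ξ‖ ≤ ε ^ 2 * K3 * (B * ‖Z 0‖) * ‖x - ξ‖ :=
    (convex_Icc (0:ℝ) 1).norm_image_sub_le_of_norm_hasDerivWithin_le hW2D
      (fun t ht => (hDb t ht).2) hξI hxI
  have hxξ1 : ‖x - ξ‖ ≤ 1 := by
    rw [Real.norm_eq_abs, abs_of_nonneg (by linarith)]
    linarith
  have hK3Z : (0:ℝ) ≤ ε ^ 2 * K3 * (B * ‖Z 0‖) :=
    mul_nonneg (mul_nonneg (sq_nonneg ε) hK30.le) hBZ0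
  have hMW1' : ‖W1 x - W1 ξ‖ ≤ ε ^ 2 * K3 * (B * ‖Z 0‖) := by
    linarith [mul_le_mul_of_nonneg_left hxξ1 hK3Z]
  have hMW2' : ‖W2 x - W2 ξ‖ ≤ ε ^ 2 * K3 * (B * ‖Z 0‖) := by
    linarith [mul_le_mul_of_nonneg_left hxξ1 hK3Z]
  -- correction terms are small
  have hRsmall : ∀ t ∈ Icc (0:ℝ) 1, ‖(ε : ℂ) * (R1 t * Z t 1)‖ ≤ ε ^ 2 * Kg * (B * ‖Z 0‖)
      ∧ ‖(ε : ℂ) * (R2 t * Z t 0)‖ ≤ ε ^ 2 * Kg * (B * ‖Z 0‖) := by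
    intro t ht
    obtain ⟨hZ0b, hZ1b⟩ := hZb t ht
    have hgbt := hgb t ht
    have h1 : ‖(ε : ℂ) * (R1 t * Z t 1)‖ = ε * (|g t| * ‖Z t 1‖) := by
      rw [hR1def]
      simp only
      rw [norm_mul, norm_mul, norm_mul, norm_mul, hnr, hnr, Complex.norm_I, hEn1,
        abs_of_pos hε, one_mul, mul_one]
    have h2 : ‖(ε : ℂ) * (R2 t * Z t 0)‖ = ε * (|g t| * ‖Z t 0‖) := by
      rw [hR2def]
      simp only
      rw [norm_mul, norm_mul, norm_mul, norm_mul, norm_neg, hnr, hnr, Complex.norm_I, hEp1,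
        abs_of_pos hε, one_mul, mul_one]
    constructor
    · rw [h1]
      have h9 : |g t| * ‖Z t 1‖ ≤ (ε * Kg) * (B * ‖Z 0‖) :=
        mul_le_mul hgbt hZ1b (norm_nonneg _) (mul_nonneg hε.le hKg0.le)
      linarith [mul_le_mul_of_nonneg_left h9 hε.le]
    · rw [h2]
      have h9 : |g t| * ‖Z t 0‖ ≤ (ε * Kg) * (B * ‖Z 0‖) :=
        mul_le_mul hgbt hZ0b (norm_nonneg _) (mul_nonneg hε.le hKg0.le)
      linarith [mul_le_mul_of_nonneg_left h9 hε.le]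
  -- assemble components
  have hcomp1 : ‖Z x 0 - Z ξ 0‖ ≤ ε ^ 2 * (K3 + 2 * Kg) * (B * ‖Z 0‖) := by
    have hdec : Z x 0 - Z ξ 0 = (W1 x - W1 ξ) + (ε : ℂ) * (R1 x * Z x 1)
        - (ε : ℂ) * (R1 ξ * Z ξ 1) := by
      rw [hW1def]; ring
    rw [hdec]
    have t1 := norm_sub_le ((W1 x - W1 ξ) + (ε : ℂ) * (R1 x * Z x 1)) ((ε : ℂ) * (R1 ξ * Z ξ 1))
    have t2 := norm_add_le (W1 x - W1 ξ) ((ε : ℂ) * (R1 x * Z x 1))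
    have r1 := (hRsmall x hxI).1
    have r2 := (hRsmall ξ hξI).1
    linarith [hMW1']
  have hcomp2 : ‖Z x 1 - Z ξ 1‖ ≤ ε ^ 2 * (K3 + 2 * Kg) * (B * ‖Z 0‖) := by
    have hdec : Z x 1 - Z ξ 1 = (W2 x - W2 ξ) + (ε : ℂ) * (R2 x * Z x 0)
        - (ε : ℂ) * (R2 ξ * Z ξ 0) := by
      rw [hW2def]; ring
    rw [hdec]
    have t1 := norm_sub_le ((W2 x - W2 ξ) + (ε : ℂ) * (R2 x * Z x 0)) ((ε : ℂ) * (R2 ξ * Z ξ 0))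
    have t2 := norm_add_le (W2 x - W2 ξ) ((ε : ℂ) * (R2 x * Z x 0))
    have r1 := (hRsmall x hxI).2
    have r2 := (hRsmall ξ hξI).2
    linarith [hMW2']
  -- conclusion
  calc ‖Z x - Z ξ‖ ≤ ‖(Z x - Z ξ) 0‖ + ‖(Z x - Z ξ) 1‖ := stmt3_euc_le_sum _
    _ = ‖Z x 0 - Z ξ 0‖ + ‖Z x 1 - Z ξ 1‖ := by simp
    _ ≤ ε ^ 2 * (K3 + 2 * Kg) * (B * ‖Z 0‖) + ε ^ 2 * (K3 + 2 * Kg) * (B * ‖Z 0‖) :=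
        add_le_add hcomp1 hcomp2
    _ ≤ C * ε ^ 2 * ‖Z 0‖ := by
        rw [hCdef]
        linarith [mul_nonneg (sq_nonneg ε) (norm_nonneg (Z 0))]
end
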